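/- arXiv:2110.01914 — 4 statements merged into one kernel-verified Lean document; each statement's English description precedes it below -/
import Mathlib

section
/- Let G = (V, E) be a Borel graph of bounded maximum degree such that every vertex has even degree. Then there exists a Borel set 𝔐 of finite cycles of G that are pairwise edge- and vertex-disjoint (C ∩ D = ∅ for all distinct C, D ∈ 𝔐) and which is maximal with this property: every cycle of G meets some cycle in 𝔐. Consequently, the Borel graph H = (V, E \ ⋃_{C ∈ 𝔐} C) obtained by deleting the edges of all cycles in 𝔐 is an acyclic Borel graph in which every vertex has even degree at most Δ(G). -/
open MeasureTheory

/-- A code for a finite cycle of length `n+3` in the graph with edge set `E`: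
an injective cyclic sequence of vertices whose consecutive pairs are edges. -/
def IsCycleCode {V : Type*} (E : Set (V × V)) (C : (n : ℕ) × (Fin (n + 3) → V)) : Prop :=
  Function.Injective C.2 ∧ ∀ i : Fin (C.1 + 3), (C.2 i, C.2 (i + 1)) ∈ E

/-- The set of (ordered pairs representing the) edges of a cycle code. -/
def cycEdges {V : Type*} (C : (n : ℕ) × (Fin (n + 3) → V)) : Set (V × V) :=
  {p : V × V | ∃ i : Fin (C.1 + 3), p = (C.2 i, C.2 (i + 1)) ∨ p = (C.2 (i + 1), C.2 i)}

open Set Function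
open scoped Classical



lemma measurableSet_sigma_iff' {ι : Type*} {β : ι → Type*} [∀ i, MeasurableSpace (β i)]
    {S : Set (Sigma β)} : MeasurableSet S ↔ ∀ i, MeasurableSet (Sigma.mk i ⁻¹' S) :=
  MeasurableSpace.measurableSet_iInf.trans (forall_congr' fun _ => Iff.rfl)

lemma projR_meas {α : Type*} [MeasurableSpace α] [StandardBorelSpace α]
    (k : ℕ) (R : Set (α × ℝ)) (hR : MeasurableSet R)
    (hfin : ∀ a, {t | (a, t) ∈ R}.Finite) (hcard : ∀ a, {t | (a, t) ∈ R}.ncard ≤ k) :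
    MeasurableSet {a | ∃ t, (a, t) ∈ R} := by
  induction k generalizing R with
  | zero =>
    convert MeasurableSet.empty
    ext a
    simp only [mem_setOf_eq, mem_empty_iff_false, iff_false, not_exists]
    intro t ht
    have h0 : {t | (a, t) ∈ R} = ∅ :=
      ((Set.ncard_eq_zero (hfin a)).mp (Nat.le_zero.mp (hcard a)))
    exact absurd (h0 ▸ ht : t ∈ (∅ : Set ℝ)) (notMem_empty t)
  | succ k ih =>
    set F : Set (α × (Fin (k+1) → ℝ)) :=
      {p | StrictMono p.2 ∧ ∀ i, (p.1, p.2 i) ∈ R} with hFdef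
    have hF : MeasurableSet F := by
      have hFeq : F = (⋂ (i : Fin (k+1)) (j : Fin (k+1)), {p | i < j → p.2 i < p.2 j}) ∩
          ⋂ (i : Fin (k+1)), (fun p : α × (Fin (k+1) → ℝ) => (p.1, p.2 i)) ⁻¹' R := by
        ext p
        simp only [hFdef, mem_setOf_eq, mem_inter_iff, mem_iInter, mem_preimage]
        exact and_congr_left' ⟨fun h i j hij => h hij, fun h _ _ hij => h _ _ hij⟩
      rw [hFeq]
      apply MeasurableSet.inter
      · refine MeasurableSet.iInter fun i => MeasurableSet.iInter fun j => ?_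
        by_cases hij : i < j
        · simp only [hij, true_implies]
          exact measurableSet_lt (measurable_snd.eval) (measurable_snd.eval)
        · simp only [hij, false_implies, setOf_true]; exact MeasurableSet.univ
      · exact MeasurableSet.iInter fun i =>
          (measurable_fst.prodMk (measurable_snd.eval)) hR
    have key : ∀ p ∈ F, range p.2 = {t | (p.1, t) ∈ R} := by
      rintro ⟨a, y⟩ ⟨hy1, hy2⟩
      apply eq_of_subset_of_ncard_le
      · rintro t ⟨i, rfl⟩; exact hy2 i
      · have hr : (range y).ncard = k + 1 := by
          rw [← image_univ, ncard_image_of_injective _ hy1.injective, ncard_univ]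
          simp
        rw [hr]; exact hcard a
      · exact hfin a
    have hinj : InjOn Prod.fst F := by
      rintro ⟨a, y⟩ hy ⟨b, z⟩ hz (h : a = b)
      subst h
      have hr : range y = range z := by
        rw [key _ hy, key _ hz]
      have : y = z := (hy.1.range_inj hz.1).mp hr
      rw [this]
    have hG : MeasurableSet (Prod.fst '' F) :=
      hF.image_of_measurable_injOn measurable_fst hinj
    have hGmem : ∀ a, k + 1 ≤ {t | (a, t) ∈ R}.ncard → a ∈ Prod.fst '' F := by
      intro a ha
      obtain ⟨T, hTsub, hTcard⟩ := Set.exists_subset_card_eq ha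
      have hTfin : T.Finite := (hfin a).subset hTsub
      have hTcard' : hTfin.toFinset.card = k + 1 := by
        rw [← Set.ncard_eq_toFinset_card T hTfin]; exact hTcard
      refine ⟨(a, fun i => hTfin.toFinset.orderEmbOfFin hTcard' i), ⟨?_, ?_⟩, rfl⟩
      · exact (hTfin.toFinset.orderEmbOfFin hTcard').strictMono
      · intro i
        exact hTsub ((hTfin.mem_toFinset).mp (Finset.orderEmbOfFin_mem _ hTcard' i))
    -- the rest
    set G := Prod.fst '' F with hGdef
    set R' : Set (α × ℝ) := R ∩ (Gᶜ ×ˢ univ) with hR'def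
    have hsub : ∀ a, {t | (a, t) ∈ R'} ⊆ {t | (a, t) ∈ R} := by
      intro a t ht; exact ht.1
    have hsec2 : ∀ a, a ∉ G → {t | (a, t) ∈ R'} = {t | (a, t) ∈ R} := by
      intro a hag; ext t; simp [hR'def, hag]
    have hsec1 : ∀ a, a ∈ G → {t | (a, t) ∈ R'} = ∅ := by
      intro a hag; ext t; simp [hR'def, hag]
    have hproj' : MeasurableSet {a | ∃ t, (a, t) ∈ R'} := by
      refine ih R' (hR.inter (hG.compl.prod MeasurableSet.univ)) ?_ ?_
      · intro a; exact (hfin a).subset (hsub a)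
      · intro a
        by_cases hag : a ∈ G
        · rw [hsec1 a hag]; simp
        · rw [hsec2 a hag]
          by_contra hlt
          push_neg at hlt
          exact hag (hGmem a hlt)
    have hfinal : {a | ∃ t, (a, t) ∈ R} = G ∪ {a | ∃ t, (a, t) ∈ R'} := by
      ext a
      constructor
      · rintro ⟨t, ht⟩
        by_cases hag : a ∈ G
        · exact Or.inl hag
        · exact Or.inr ⟨t, ht, by simp [hag]⟩
      · rintro (hag | ⟨t, ht, -⟩)
        · obtain ⟨⟨b, y⟩, hbF, rfl⟩ := hag
          exact ⟨y 0, hbF.2 0⟩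
        · exact ⟨t, ht⟩
    rw [hfinal]
    exact hG.union hproj'

lemma proj_meas {α β : Type*} [MeasurableSpace α] [StandardBorelSpace α]
    [MeasurableSpace β] [StandardBorelSpace β]
    (k : ℕ) (R : Set (α × β)) (hR : MeasurableSet R)
    (hfin : ∀ a, {b | (a, b) ∈ R}.Finite) (hcard : ∀ a, {b | (a, b) ∈ R}.ncard ≤ k) :
    MeasurableSet {a | ∃ b, (a, b) ∈ R} := by
  obtain ⟨j, hj⟩ := exists_measurableEmbedding_real β
  have hemb : MeasurableEmbedding (fun p : α × β => (p.1, j p.2)) :=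
    MeasurableEmbedding.id.prodMap hj
  set R' : Set (α × ℝ) := (fun p : α × β => (p.1, j p.2)) '' R with hR'def
  have hsec : ∀ a, {t | (a, t) ∈ R'} = j '' {b | (a, b) ∈ R} := by
    intro a; ext t
    constructor
    · rintro ⟨⟨a', b⟩, hab, heq⟩
      simp only [Prod.mk.injEq] at heq
      obtain ⟨rfl, rfl⟩ := heq
      exact ⟨b, hab, rfl⟩
    · rintro ⟨b, hb, rfl⟩
      exact ⟨(a, b), hb, rfl⟩
  have hmeas' : MeasurableSet R' := hemb.measurableSet_image' hR
  have := projR_meas k R' hmeas'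
    (fun a => by rw [hsec a]; exact (hfin a).image j)
    (fun a => by rw [hsec a, Set.ncard_image_of_injective _ hj.injective]; exact hcard a)
  have hfinal : {a | ∃ b, (a, b) ∈ R} = {a | ∃ t, (a, t) ∈ R'} := by
    ext a
    constructor
    · rintro ⟨b, hb⟩; exact ⟨j b, ⟨(a, b), hb, rfl⟩⟩
    · rintro ⟨t, ht⟩
      have ht' : t ∈ {t | (a, t) ∈ R'} := ht
      rw [hsec a] at ht'
      obtain ⟨b, hb, -⟩ := ht'
      exact ⟨b, hb⟩
  rw [hfinal]; exact this


section Walks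
variable {V : Type*} (E : Set (V × V)) (D : ℕ)
  (hdeg : ∀ v : V, {w | (v, w) ∈ E}.Finite ∧ {w | (v, w) ∈ E}.ncard ≤ D)

noncomputable def nbr (v : V) : Finset V := (hdeg v).1.toFinset

lemma mem_nbr {v w : V} : w ∈ nbr E D hdeg v ↔ (v, w) ∈ E := by
  simp [nbr, Set.Finite.mem_toFinset]

lemma card_nbr (v : V) : (nbr E D hdeg v).card ≤ D := by
  have h := (hdeg v).2
  rwa [Set.ncard_eq_toFinset_card _ (hdeg v).1] at h

noncomputable def ball : ℕ → V → Finset V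
  | 0, v => {v}
  | (t+1), v => ball t v ∪ (ball t v).biUnion (nbr E D hdeg)

lemma ball_mono_succ (t : ℕ) (v : V) : ball E D hdeg t v ⊆ ball E D hdeg (t+1) v :=
  Finset.subset_union_left

lemma ball_mono {t t' : ℕ} (h : t ≤ t') (v : V) : ball E D hdeg t v ⊆ ball E D hdeg t' v := by
  induction t' with
  | zero => obtain rfl := Nat.le_zero.mp h; exact subset_rfl
  | succ t' ih =>
    rcases Nat.lt_or_ge t (t'+1) with h' | h'
    · exact (ih (Nat.lt_succ_iff.mp h')).trans (ball_mono_succ E D hdeg t' v)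
    · obtain rfl : t = t' + 1 := le_antisymm h h'
      exact subset_rfl

lemma self_mem_ball (t : ℕ) (v : V) : v ∈ ball E D hdeg t v := by
  induction t with
  | zero => rw [show ball E D hdeg 0 v = {v} from rfl]; exact Finset.mem_singleton_self v
  | succ t ih => exact ball_mono_succ E D hdeg t v ih

lemma nbr_mem_ball {t : ℕ} {v u w : V} (hu : u ∈ ball E D hdeg t v)
    (hw : (u, w) ∈ E) : w ∈ ball E D hdeg (t+1) v := by
  refine Finset.mem_union_right _ (Finset.mem_biUnion.mpr ⟨u, hu, ?_⟩)
  exact (mem_nbr E D hdeg).mpr hw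

lemma card_ball (t : ℕ) (v : V) : (ball E D hdeg t v).card ≤ (D+1)^(t+1) := by
  induction t with
  | zero =>
    rw [show ball E D hdeg 0 v = {v} from rfl, Finset.card_singleton, pow_one]
    omega
  | succ t ih =>
    calc (ball E D hdeg (t+1) v).card
        ≤ (ball E D hdeg t v).card + ((ball E D hdeg t v).biUnion (nbr E D hdeg)).card :=
          Finset.card_union_le _ _
      _ ≤ (ball E D hdeg t v).card + (ball E D hdeg t v).card * D := by
          gcongr
          refine (Finset.card_biUnion_le).trans ?_
          calc (∑ u ∈ ball E D hdeg t v, (nbr E D hdeg u).card)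
              ≤ ∑ _u ∈ ball E D hdeg t v, D :=
                Finset.sum_le_sum fun u _ => card_nbr E D hdeg u
            _ = (ball E D hdeg t v).card * D := by simp [mul_comm]
      _ = (ball E D hdeg t v).card * (D + 1) := by ring
      _ ≤ (D+1)^(t+1) * (D+1) := by gcongr
      _ = (D+1)^(t+2) := by ring

open Fin.NatCast Fin.CommRing in
lemma walk_mem_ball {m : ℕ} {f : Fin (m+3) → V} (hf : ∀ i, (f i, f (i+1)) ∈ E)
    (i0 j : Fin (m+3)) : f j ∈ ball E D hdeg (m+3) (f i0) := by
  have key : ∀ t : ℕ, f (i0 + (t : Fin (m+3))) ∈ ball E D hdeg t (f i0) := by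
    intro t
    induction t with
    | zero => simpa using self_mem_ball E D hdeg 0 (f i0)
    | succ t ih =>
      have hc : ((t+1 : ℕ) : Fin (m+3)) = (t : Fin (m+3)) + 1 := by push_cast; ring
      rw [hc, ← add_assoc]
      exact nbr_mem_ball E D hdeg ih (hf (i0 + (t : Fin (m+3))))
  have hj : j = i0 + ((j - i0 : Fin (m+3)).val : Fin (m+3)) := by
    rw [Fin.cast_val_eq_self]
    abel
  rw [hj]
  exact ball_mono E D hdeg (le_trans (Fin.is_le _) (by omega)) (f i0) (key _)

lemma walkset_finite (hdeg : ∀ v : V, {w | (v, w) ∈ E}.Finite ∧ {w | (v, w) ∈ E}.ncard ≤ D)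
    (m : ℕ) (v : V) :
    {f : Fin (m+3) → V | (∀ i, (f i, f (i+1)) ∈ E) ∧ ∃ i, f i = v}.Finite ∧
    {f : Fin (m+3) → V | (∀ i, (f i, f (i+1)) ∈ E) ∧ ∃ i, f i = v}.ncard
      ≤ ((D+1)^(m+4))^(m+3) := by
  set B : Finset (Fin (m+3) → V) := Fintype.piFinset fun _ => ball E D hdeg (m+3) v with hB
  have hsub : {f : Fin (m+3) → V | (∀ i, (f i, f (i+1)) ∈ E) ∧ ∃ i, f i = v} ⊆ ↑B := by
    rintro f ⟨hf, i0, hi0⟩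
    refine Finset.mem_coe.mpr (Fintype.mem_piFinset.mpr fun j => ?_)
    have := walk_mem_ball E D hdeg hf i0 j
    rwa [hi0] at this
  constructor
  · exact B.finite_toSet.subset hsub
  · calc _ ≤ (↑B : Set (Fin (m+3) → V)).ncard := Set.ncard_le_ncard hsub B.finite_toSet
      _ = B.card := Set.ncard_coe_finset B
      _ ≤ ((D+1)^(m+4))^(m+3) := by
          rw [hB, Fintype.card_piFinset]
          calc (∏ _i : Fin (m+3), (ball E D hdeg (m+3) v).card)
              ≤ ∏ _i : Fin (m+3), (D+1)^(m+4) :=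
                Finset.prod_le_prod (fun _ _ => Nat.zero_le _)
                  (fun _ _ => card_ball E D hdeg (m+3) v)
            _ = ((D+1)^(m+4))^(m+3) := by simp

end Walks

lemma meas_eq_set {α γ : Type*} [MeasurableSpace α] [MeasurableSpace γ] [StandardBorelSpace γ]
    {f g : α → γ} (hf : Measurable f) (hg : Measurable g) :
    MeasurableSet {x | f x = g x} := by
  letI := upgradeStandardBorel γ
  exact (hf.prodMk hg) isClosed_diagonal.measurableSet

lemma ncard_iUnion_fin_le {α ι : Type*} [Fintype ι] (s : ι → Set α) (c : ℕ)
    (hfin : ∀ i, (s i).Finite) (hc : ∀ i, (s i).ncard ≤ c) :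
    (⋃ i, s i).Finite ∧ (⋃ i, s i).ncard ≤ Fintype.card ι * c := by
  have hU : (⋃ i, s i) = ↑(Finset.univ.biUnion fun i => (hfin i).toFinset) := by
    ext x; simp [Set.Finite.mem_toFinset, Finset.mem_biUnion]
  constructor
  · exact Set.finite_iUnion hfin
  · rw [hU, Set.ncard_coe_finset]
    calc (Finset.univ.biUnion fun i => (hfin i).toFinset).card
        ≤ ∑ i : ι, ((hfin i).toFinset).card := Finset.card_biUnion_le
      _ ≤ ∑ _i : ι, c := Finset.sum_le_sum fun i _ => by
          rw [← Set.ncard_eq_toFinset_card _ (hfin i)]; exact hc i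
      _ = Fintype.card ι * c := by simp [mul_comm]


section C1
variable {V : Type*} [MeasurableSpace V] [StandardBorelSpace V]

noncomputable def embR (n : ℕ) : ((Fin (n+3) → V)) → ℝ :=
  (exists_measurableEmbedding_real (Fin (n+3) → V)).choose

lemma embR_spec (n : ℕ) : MeasurableEmbedding (embR (V := V) n) :=
  (exists_measurableEmbedding_real (Fin (n+3) → V)).choose_spec

end C1

noncomputable def qpair : ℕ ≃ ℚ × ℚ := (Denumerable.eqv (ℚ × ℚ)).symm

noncomputable def Iset (k : ℕ) : Set ℝ :=
  Set.Ioo (((qpair k).1 : ℝ)) (((qpair k).2 : ℝ))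

lemma Iset_open (k : ℕ) : IsOpen (Iset k) := isOpen_Ioo

lemma exists_Iset (x : ℝ) (S : Set ℝ) (hS : S.Finite) (hx : x ∉ S) :
    ∃ k, x ∈ Iset k ∧ Disjoint (Iset k) S := by
  have hcl : IsClosed S := hS.isClosed
  have hopen : IsOpen Sᶜ := hcl.isOpen_compl
  obtain ⟨ε, hε, hball⟩ := Metric.isOpen_iff.mp hopen x hx
  obtain ⟨p, hp1, hp2⟩ := exists_rat_btwn (show x - ε < x by linarith)
  obtain ⟨q, hq1, hq2⟩ := exists_rat_btwn (show x < x + ε by linarith)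
  refine ⟨qpair.symm (p, q), ?_, ?_⟩
  · simp only [Iset, Equiv.apply_symm_apply]
    exact ⟨hp2, hq1⟩
  · rw [Set.disjoint_left]
    intro y hy hyS
    simp only [Iset, Equiv.apply_symm_apply, Set.mem_Ioo] at hy
    have : y ∈ Metric.ball x ε := by
      rw [Metric.mem_ball, Real.dist_eq, abs_lt]
      constructor <;> linarith
    exact hball this hyS

section C2
variable {V : Type*}

/-- consecutive-edge condition for a cyclic code of length `m+3`. -/
def edgeOK (E : Set (V × V)) (m : ℕ) (g : Fin (m+3) → V) : Prop :=
  ∀ i, (g i, g (i + 1)) ∈ E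

/-- two cyclic codes share an (unordered) edge. -/
def meets {n m : ℕ} (f : Fin (n+3) → V) (g : Fin (m+3) → V) : Prop :=
  ∃ i j, (f i = g j ∧ f (i+1) = g (j+1)) ∨ (f i = g (j+1) ∧ f (i+1) = g j)

lemma meets_symm {n m : ℕ} {f : Fin (n+3) → V} {g : Fin (m+3) → V}
    (h : meets f g) : meets g f := by
  obtain ⟨i, j, h | h⟩ := h
  · exact ⟨j, i, Or.inl ⟨h.1.symm, h.2.symm⟩⟩
  · exact ⟨j, i, Or.inr ⟨h.2.symm, h.1.symm⟩⟩

lemma meets_self {n : ℕ} (f : Fin (n+3) → V) : meets f f := ⟨0, 0, Or.inl ⟨rfl, rfl⟩⟩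

lemma meets_iff_cycEdges {n m : ℕ} (f : Fin (n+3) → V) (g : Fin (m+3) → V) :
    meets f g ↔ ((cycEdges ⟨n, f⟩ : Set (V × V)) ∩ cycEdges ⟨m, g⟩).Nonempty := by
  constructor
  · rintro ⟨i, j, ⟨h1, h2⟩ | ⟨h1, h2⟩⟩
    · exact ⟨(f i, f (i+1)), ⟨i, Or.inl rfl⟩, ⟨j, Or.inl (by rw [h1, h2])⟩⟩
    · exact ⟨(f i, f (i+1)), ⟨i, Or.inl rfl⟩, ⟨j, Or.inr (by rw [h1, h2])⟩⟩
  · rintro ⟨p, ⟨i, hi | hi⟩, ⟨j, hj | hj⟩⟩ <;>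
      rw [hi] at hj <;> rw [Prod.ext_iff] at hj <;> obtain ⟨h1, h2⟩ := hj
    · exact ⟨i, j, Or.inl ⟨h1, h2⟩⟩
    · exact ⟨i, j, Or.inr ⟨h1, h2⟩⟩
    · exact ⟨i, j, Or.inr ⟨h2, h1⟩⟩
    · exact ⟨i, j, Or.inl ⟨h2, h1⟩⟩

end C2

section C3
variable {V : Type*} [MeasurableSpace V] [StandardBorelSpace V]
variable (E : Set (V × V)) (D : ℕ)

/-- uniform bound for the number of edge-compatible codes of length `q+3`
meeting a given code of length `n+3`. -/
def bndK (D q n : ℕ) : ℕ := (n+3) * ((D+1)^(q+4))^(q+3)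

lemma nbrsCross_finite (hdeg : ∀ v : V, {w | (v, w) ∈ E}.Finite ∧ {w | (v, w) ∈ E}.ncard ≤ D)
    (q n : ℕ) (f : Fin (n+3) → V) :
    {g : Fin (q+3) → V | edgeOK E q g ∧ meets f g}.Finite ∧
    {g : Fin (q+3) → V | edgeOK E q g ∧ meets f g}.ncard ≤ bndK D q n := by
  have hsub : {g : Fin (q+3) → V | edgeOK E q g ∧ meets f g} ⊆
      ⋃ i : Fin (n+3), {g : Fin (q+3) → V | (∀ j, (g j, g (j+1)) ∈ E) ∧ ∃ j, g j = f i} := by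
    rintro g ⟨hg, i, j, ⟨h1, _⟩ | ⟨h1, _⟩⟩
    · exact Set.mem_iUnion.mpr ⟨i, hg, j, h1.symm⟩
    · exact Set.mem_iUnion.mpr ⟨i, hg, j + 1, h1.symm⟩
  have hw := fun i : Fin (n+3) => walkset_finite E D hdeg q (f i)
  have hun := ncard_iUnion_fin_le
    (fun i : Fin (n+3) => {g : Fin (q+3) → V | (∀ j, (g j, g (j+1)) ∈ E) ∧ ∃ j, g j = f i})
    (((D+1)^(q+4))^(q+3)) (fun i => (hw i).1) (fun i => (hw i).2)
  refine ⟨hun.1.subset hsub, ?_⟩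
  calc {g : Fin (q+3) → V | edgeOK E q g ∧ meets f g}.ncard
      ≤ _ := Set.ncard_le_ncard hsub hun.1
    _ ≤ Fintype.card (Fin (n+3)) * (((D+1)^(q+4))^(q+3)) := hun.2
    _ = bndK D q n := by simp [bndK]

noncomputable def colorSet (n : ℕ) (f : Fin (n+3) → V) : Set ℕ :=
  {k | embR n f ∈ Iset k ∧
    ∀ g : Fin (n+3) → V, g ≠ f → edgeOK E n g → meets f g → embR n g ∉ Iset k}

noncomputable def colorFn (n : ℕ) (f : Fin (n+3) → V) : ℕ := sInf (colorSet E n f)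

lemma colorSet_nonempty (hdeg : ∀ v : V, {w | (v, w) ∈ E}.Finite ∧ {w | (v, w) ∈ E}.ncard ≤ D)
    (n : ℕ) (f : Fin (n+3) → V) : (colorSet E n f).Nonempty := by
  set S : Set ℝ := embR n '' {g : Fin (n+3) → V | g ≠ f ∧ edgeOK E n g ∧ meets f g} with hS
  have hSfin : S.Finite := by
    apply Set.Finite.image
    apply ((nbrsCross_finite E D hdeg n n f).1).subset
    rintro g ⟨_, h2, h3⟩; exact ⟨h2, h3⟩
  have hxS : embR n f ∉ S := by
    rintro ⟨g, ⟨hg1, -, -⟩, hg4⟩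
    exact hg1 ((embR_spec n).injective hg4)
  obtain ⟨k, hk1, hk2⟩ := exists_Iset (embR n f) S hSfin hxS
  refine ⟨k, hk1, fun g h1 h2 h3 hmem => ?_⟩
  exact Set.disjoint_left.mp hk2 hmem ⟨g, ⟨h1, h2, h3⟩, rfl⟩

lemma color_proper (hdeg : ∀ v : V, {w | (v, w) ∈ E}.Finite ∧ {w | (v, w) ∈ E}.ncard ≤ D)
    (n : ℕ) (f g : Fin (n+3) → V) (hfg : g ≠ f)
    (hg : edgeOK E n g) (hm : meets f g) :
    colorFn E n f ≠ colorFn E n g := by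
  intro h
  have hkf := Nat.sInf_mem (colorSet_nonempty E D hdeg n f)
  have hkg := Nat.sInf_mem (colorSet_nonempty E D hdeg n g)
  rw [← colorFn] at hkf hkg
  rw [← h] at hkg
  exact hkf.2 g hfg hg hm hkg.1

lemma measurable_edgeOK_snd (hE : MeasurableSet E) {α : Type*} [MeasurableSpace α] (q : ℕ)
    (u : α → (Fin (q+3) → V)) (hu : Measurable u) :
    MeasurableSet {a | edgeOK E q (u a)} := by
  have : {a | edgeOK E q (u a)} =
      ⋂ i : Fin (q+3), (fun a => (u a i, u a (i+1))) ⁻¹' E := by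
    ext a; simp [edgeOK]
  rw [this]
  exact MeasurableSet.iInter fun i => ((hu.eval).prodMk (hu.eval)) hE

lemma measurable_meets {α : Type*} [MeasurableSpace α] (q n : ℕ)
    (u : α → (Fin (n+3) → V)) (w : α → (Fin (q+3) → V))
    (hu : Measurable u) (hw : Measurable w) :
    MeasurableSet {a | meets (u a) (w a)} := by
  have : {a | meets (u a) (w a)} =
      ⋃ (i : Fin (n+3)) (j : Fin (q+3)),
        (({a | u a i = w a j} ∩ {a | u a (i+1) = w a (j+1)}) ∪
         ({a | u a i = w a (j+1)} ∩ {a | u a (i+1) = w a j})) := by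
    ext a
    simp only [Set.mem_iUnion, Set.mem_union, Set.mem_inter_iff, Set.mem_setOf_eq]
    rfl
  rw [this]
  refine MeasurableSet.iUnion fun i => MeasurableSet.iUnion fun j => MeasurableSet.union
    (MeasurableSet.inter ?_ ?_) (MeasurableSet.inter ?_ ?_) <;>
    exact meas_eq_set (hu.eval) (hw.eval)

lemma exists_meets_measurable
    (hdeg : ∀ v : V, {w | (v, w) ∈ E}.Finite ∧ {w | (v, w) ∈ E}.ncard ≤ D)
    (q n : ℕ) (T : Set ((Fin (n+3) → V) × (Fin (q+3) → V))) (hT : MeasurableSet T)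
    (hTsub : ∀ p ∈ T, edgeOK E q p.2 ∧ meets p.1 p.2) :
    MeasurableSet {f : Fin (n+3) → V | ∃ g, (f, g) ∈ T} := by
  have hsub : ∀ f, {g | (f, g) ∈ T} ⊆ {g : Fin (q+3) → V | edgeOK E q g ∧ meets f g} := by
    intro f g hg
    exact hTsub (f, g) hg
  have hfin : ∀ f, {g | (f, g) ∈ T}.Finite :=
    fun f => ((nbrsCross_finite E D hdeg q n f).1).subset (hsub f)
  have hcard : ∀ f, {g | (f, g) ∈ T}.ncard ≤ bndK D q n :=
    fun f => le_trans (Set.ncard_le_ncard (hsub f) (nbrsCross_finite E D hdeg q n f).1)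
      (nbrsCross_finite E D hdeg q n f).2
  exact proj_meas (bndK D q n) T hT hfin hcard

lemma blocked_measurable
    (hdeg : ∀ v : V, {w | (v, w) ∈ E}.Finite ∧ {w | (v, w) ∈ E}.ncard ≤ D)
    (q n : ℕ) (S : Set (Fin (q+3) → V)) (hS : MeasurableSet S)
    (hScyc : ∀ g ∈ S, edgeOK E q g) :
    MeasurableSet {f : Fin (n+3) → V | ∃ g ∈ S, meets f g} := by
  have : {f : Fin (n+3) → V | ∃ g ∈ S, meets f g} =
      {f : Fin (n+3) → V | ∃ g, (f, g) ∈ {p : (Fin (n+3) → V) × (Fin (q+3) → V) |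
        p.2 ∈ S ∧ meets p.1 p.2}} := rfl
  rw [this]
  refine exists_meets_measurable E D hdeg q n _ ?_ ?_
  · exact MeasurableSet.inter (measurable_snd hS)
      (measurable_meets q n Prod.fst Prod.snd measurable_fst measurable_snd)
  · rintro p ⟨h1, h2⟩
    exact ⟨hScyc p.2 h1, h2⟩

lemma color_measurable (hE : MeasurableSet E)
    (hdeg : ∀ v : V, {w | (v, w) ∈ E}.Finite ∧ {w | (v, w) ∈ E}.ncard ≤ D)
    (n k : ℕ) : MeasurableSet {f : Fin (n+3) → V | k ∈ colorSet E n f} := by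
  have h1 : MeasurableSet {f : Fin (n+3) → V | embR n f ∈ Iset k} :=
    (embR_spec n).measurable ((Iset_open k).measurableSet)
  have h2 : MeasurableSet {f : Fin (n+3) → V | ∃ g, (f, g) ∈
      {p : (Fin (n+3) → V) × (Fin (n+3) → V) |
        p.2 ≠ p.1 ∧ edgeOK E n p.2 ∧ meets p.1 p.2 ∧ embR n p.2 ∈ Iset k}} := by
    refine exists_meets_measurable E D hdeg n n _ ?_ ?_
    · refine MeasurableSet.inter ?_ (MeasurableSet.inter ?_ (MeasurableSet.inter ?_ ?_))
      · exact (meas_eq_set measurable_snd measurable_fst).compl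
      · exact measurable_edgeOK_snd E hE n Prod.snd measurable_snd
      · exact measurable_meets n n Prod.fst Prod.snd measurable_fst measurable_snd
      · exact ((embR_spec n).measurable.comp measurable_snd) ((Iset_open k).measurableSet)
    · rintro p ⟨-, h2, h3, -⟩
      exact ⟨h2, h3⟩
  have heq : {f : Fin (n+3) → V | k ∈ colorSet E n f} =
      {f : Fin (n+3) → V | embR n f ∈ Iset k} ∩
      {f : Fin (n+3) → V | ∃ g, (f, g) ∈
        {p : (Fin (n+3) → V) × (Fin (n+3) → V) |
          p.2 ≠ p.1 ∧ edgeOK E n p.2 ∧ meets p.1 p.2 ∧ embR n p.2 ∈ Iset k}}ᶜ := by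
    ext f
    simp only [Set.mem_inter_iff, Set.mem_compl_iff, Set.mem_setOf_eq, colorSet, not_exists]
    constructor
    · rintro ⟨hf1, hf2⟩
      refine ⟨hf1, fun g hg => ?_⟩
      exact hf2 g hg.1 hg.2.1 hg.2.2.1 hg.2.2.2
    · rintro ⟨hf1, hf2⟩
      refine ⟨hf1, fun g hne hok hm hmem => hf2 g ⟨hne, hok, hm, hmem⟩⟩
  rw [heq]
  exact h1.inter h2.compl

lemma colorFn_level_measurable (hE : MeasurableSet E)
    (hdeg : ∀ v : V, {w | (v, w) ∈ E}.Finite ∧ {w | (v, w) ∈ E}.ncard ≤ D)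
    (n k : ℕ) : MeasurableSet {f : Fin (n+3) → V | colorFn E n f = k} := by
  have heq : {f : Fin (n+3) → V | colorFn E n f = k} =
      {f : Fin (n+3) → V | k ∈ colorSet E n f} ∩
      ⋂ (k' : ℕ) (_ : k' < k), {f : Fin (n+3) → V | k' ∈ colorSet E n f}ᶜ := by
    ext f
    simp only [Set.mem_inter_iff, Set.mem_iInter, Set.mem_compl_iff, Set.mem_setOf_eq]
    constructor
    · rintro rfl
      refine ⟨Nat.sInf_mem (colorSet_nonempty E D hdeg n f), fun k' hk' hmem => ?_⟩
      have h1 : colorFn E n f ≤ k' := Nat.sInf_le hmem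
      omega
    · rintro ⟨h1, h2⟩
      refine le_antisymm (Nat.sInf_le h1) ?_
      by_contra hlt
      push_neg at hlt
      have hmem : colorFn E n f ∈ colorSet E n f :=
        Nat.sInf_mem (colorSet_nonempty E D hdeg n f)
      exact h2 _ hlt hmem
  rw [heq]
  exact (color_measurable E D hE hdeg n k).inter
    (MeasurableSet.iInter fun k' => MeasurableSet.iInter fun _ =>
      (color_measurable E D hE hdeg n k').compl)

end C3

section C4
variable {V : Type*} [MeasurableSpace V] [StandardBorelSpace V]
variable (E : Set (V × V)) (D : ℕ)

def cyc (n : ℕ) (f : Fin (n+3) → V) : Prop := Function.Injective f ∧ edgeOK E n f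

def isBlocked (P : (q : ℕ) → Set (Fin (q+3) → V)) {n : ℕ} (f : Fin (n+3) → V) : Prop :=
  ∃ q, ∃ g ∈ P q, meets f g

noncomputable def innerF (P : (q : ℕ) → Set (Fin (q+3) → V)) (n : ℕ) :
    ℕ → Set (Fin (n+3) → V)
  | 0 => ∅
  | m+1 => innerF P n m ∪ {f | cyc E n f ∧ colorFn E n f = m ∧ ¬ isBlocked P f ∧
      ∀ g ∈ innerF P n m, ¬ meets f g}

noncomputable def selN (P : (q : ℕ) → Set (Fin (q+3) → V)) (n : ℕ) : Set (Fin (n+3) → V) :=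
  ⋃ m, innerF E P n m

noncomputable def WFam : ℕ → (q : ℕ) → Set (Fin (q+3) → V)
  | 0 => fun _ => ∅
  | n+1 => fun q => WFam n q ∪ (if q = n then selN E (WFam n) q else ∅)

noncomputable def MFam (q : ℕ) : Set (Fin (q+3) → V) := WFam E (q+1) q

lemma innerF_mono (P : (q : ℕ) → Set (Fin (q+3) → V)) (n : ℕ) {m m' : ℕ} (h : m ≤ m') :
    innerF E P n m ⊆ innerF E P n m' := by
  induction m' with
  | zero => obtain rfl := Nat.le_zero.mp h; exact subset_rfl
  | succ m' ih =>
    rcases Nat.lt_or_ge m (m'+1) with h' | h'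
    · exact (ih (Nat.lt_succ_iff.mp h')).trans Set.subset_union_left
    · obtain rfl : m = m' + 1 := le_antisymm h h'
      exact subset_rfl

lemma innerF_cyc (P : (q : ℕ) → Set (Fin (q+3) → V)) (n m : ℕ) {f : Fin (n+3) → V}
    (hf : f ∈ innerF E P n m) : cyc E n f := by
  induction m with
  | zero => exact absurd hf (Set.notMem_empty f)
  | succ m ih =>
    rcases hf with hf | hf
    · exact ih hf
    · exact hf.1

lemma innerF_notBlocked (P : (q : ℕ) → Set (Fin (q+3) → V)) (n m : ℕ) {f : Fin (n+3) → V}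
    (hf : f ∈ innerF E P n m) : ¬ isBlocked P f := by
  induction m with
  | zero => exact absurd hf (Set.notMem_empty f)
  | succ m ih =>
    rcases hf with hf | hf
    · exact ih hf
    · exact hf.2.2.1

lemma innerF_disj
    (hdeg : ∀ v : V, {w | (v, w) ∈ E}.Finite ∧ {w | (v, w) ∈ E}.ncard ≤ D)
    (P : (q : ℕ) → Set (Fin (q+3) → V)) (n m : ℕ) {f g : Fin (n+3) → V}
    (hf : f ∈ innerF E P n m) (hg : g ∈ innerF E P n m) (hm : meets f g) (hne : f ≠ g) :
    False := by
  induction m with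
  | zero => exact absurd hf (Set.notMem_empty f)
  | succ m ih =>
    rcases hf with hf | hf <;> rcases hg with hg | hg
    · exact ih hf hg
    · exact hg.2.2.2 f hf (meets_symm hm)
    · exact hf.2.2.2 g hg hm
    · exact color_proper E D hdeg n f g (Ne.symm hne) hg.1.2 hm (hf.2.1.trans hg.2.1.symm)

lemma selN_cyc (P : (q : ℕ) → Set (Fin (q+3) → V)) (n : ℕ) {f : Fin (n+3) → V}
    (hf : f ∈ selN E P n) : cyc E n f := by
  obtain ⟨m, hm⟩ := Set.mem_iUnion.mp hf
  exact innerF_cyc E P n m hm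

lemma WFam_cyc (N q : ℕ) {f : Fin (q+3) → V} (hf : f ∈ WFam E N q) : cyc E q f := by
  induction N with
  | zero => exact absurd hf (Set.notMem_empty f)
  | succ N ih =>
    rcases hf with hf | hf
    · exact ih hf
    · split at hf
      · exact selN_cyc E (WFam E N) q hf
      · exact absurd hf (Set.notMem_empty f)

lemma WFam_mono {N N' : ℕ} (h : N ≤ N') (q : ℕ) : WFam E N q ⊆ WFam E N' q := by
  induction N' with
  | zero => obtain rfl := Nat.le_zero.mp h; exact subset_rfl
  | succ N' ih =>
    rcases Nat.lt_or_ge N (N'+1) with h' | h'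
    · exact (ih (Nat.lt_succ_iff.mp h')).trans Set.subset_union_left
    · obtain rfl : N = N' + 1 := le_antisymm h h'
      exact subset_rfl

lemma WFam_empty_of_le {N q : ℕ} (h : q ≥ N) : WFam E N q = ∅ := by
  induction N with
  | zero => rfl
  | succ N ih =>
    show WFam E N q ∪ _ = ∅
    rw [ih (by omega), if_neg (by omega), Set.empty_union]

lemma WFam_stable {N q : ℕ} (h : q < N) : WFam E N q = MFam E q := by
  induction N with
  | zero => omega
  | succ N ih =>
    rcases Nat.lt_or_ge q N with h' | h'
    · show WFam E N q ∪ _ = _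
      rw [ih h', if_neg (by omega), Set.union_empty]
    · obtain rfl : q = N := by omega
      rfl

lemma WFam_subset_MFam (N q : ℕ) : WFam E N q ⊆ MFam E q := by
  rcases Nat.lt_or_ge q N with h | h
  · exact (WFam_stable E h).le
  · rw [WFam_empty_of_le E h]; exact Set.empty_subset _

lemma MFam_eq_selN (q : ℕ) : MFam E q = selN E (WFam E q) q := by
  show WFam E q q ∪ _ = _
  rw [WFam_empty_of_le E (le_refl q), if_pos rfl, Set.empty_union]

end C4

section C5
variable {V : Type*} [MeasurableSpace V] [StandardBorelSpace V]
variable (E : Set (V × V)) (D : ℕ)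

lemma injective_measurable (n : ℕ) :
    MeasurableSet {f : Fin (n+3) → V | Function.Injective f} := by
  have : {f : Fin (n+3) → V | Function.Injective f} =
      ⋂ (i : Fin (n+3)) (j : Fin (n+3)), {f : Fin (n+3) → V | f i = f j → i = j} := by
    ext f
    simp only [Set.mem_iInter, Set.mem_setOf_eq]
    exact ⟨fun h i j hij => h hij, fun h i j hij => h i j hij⟩
  rw [this]
  refine MeasurableSet.iInter fun i => MeasurableSet.iInter fun j => ?_
  by_cases hij : i = j
  · have : {f : Fin (n+3) → V | f i = f j → i = j} = Set.univ := by
      ext f; simp [hij]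
    rw [this]; exact MeasurableSet.univ
  · have : {f : Fin (n+3) → V | f i = f j → i = j} = {f : Fin (n+3) → V | f i = f j}ᶜ := by
      ext f; simp only [Set.mem_compl_iff, Set.mem_setOf_eq]
      exact ⟨fun h h' => hij (h h'), fun h h' => absurd h' h⟩
    rw [this]
    exact (meas_eq_set (measurable_pi_apply i) (measurable_pi_apply j)).compl

lemma innerF_measurable (hE : MeasurableSet E)
    (hdeg : ∀ v : V, {w | (v, w) ∈ E}.Finite ∧ {w | (v, w) ∈ E}.ncard ≤ D)
    (P : (q : ℕ) → Set (Fin (q+3) → V)) (hPmeas : ∀ q, MeasurableSet (P q))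
    (hPcyc : ∀ q, ∀ g ∈ P q, edgeOK E q g) (n m : ℕ) :
    MeasurableSet (innerF E P n m) := by
  induction m with
  | zero => exact MeasurableSet.empty
  | succ m ih =>
    refine MeasurableSet.union ih ?_
    have heq : {f : Fin (n+3) → V | cyc E n f ∧ colorFn E n f = m ∧ ¬ isBlocked P f ∧
        ∀ g ∈ innerF E P n m, ¬ meets f g} =
        (({f : Fin (n+3) → V | Function.Injective f} ∩ {f | edgeOK E n f}) ∩
          {f : Fin (n+3) → V | colorFn E n f = m}) ∩
        (({f : Fin (n+3) → V | isBlocked P f} ∪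
          {f : Fin (n+3) → V | ∃ g ∈ innerF E P n m, meets f g})ᶜ) := by
      ext f
      simp only [Set.mem_inter_iff, Set.mem_compl_iff, Set.mem_union, Set.mem_setOf_eq, cyc,
        not_or, not_exists]
      constructor
      · rintro ⟨⟨h1, h2⟩, h3, h4, h5⟩
        exact ⟨⟨⟨h1, h2⟩, h3⟩, h4, fun g => by
          intro hg
          obtain ⟨hg1, hg2⟩ := hg
          exact h5 g hg1 hg2⟩
      · rintro ⟨⟨⟨h1, h2⟩, h3⟩, h4, h5⟩
        exact ⟨⟨h1, h2⟩, h3, h4, fun g hg hm => h5 g ⟨hg, hm⟩⟩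
    rw [heq]
    refine MeasurableSet.inter (MeasurableSet.inter (MeasurableSet.inter ?_ ?_) ?_)
      (MeasurableSet.union ?_ ?_).compl
    · exact injective_measurable n
    · exact measurable_edgeOK_snd E hE n id measurable_id
    · exact colorFn_level_measurable E D hE hdeg n m
    · have : {f : Fin (n+3) → V | isBlocked P f} =
          ⋃ q, {f : Fin (n+3) → V | ∃ g ∈ P q, meets f g} := by
        ext f; simp [isBlocked]
      rw [this]
      exact MeasurableSet.iUnion fun q =>
        blocked_measurable E D hdeg q n (P q) (hPmeas q) (hPcyc q)
    · exact blocked_measurable E D hdeg n n (innerF E P n m) ih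
        (fun g hg => (innerF_cyc E P n m hg).2)

lemma WFam_measurable (hE : MeasurableSet E)
    (hdeg : ∀ v : V, {w | (v, w) ∈ E}.Finite ∧ {w | (v, w) ∈ E}.ncard ≤ D)
    (N q : ℕ) : MeasurableSet (WFam E N q) := by
  induction N generalizing q with
  | zero => exact MeasurableSet.empty
  | succ N ih =>
    refine MeasurableSet.union (ih q) ?_
    by_cases h : q = N
    · rw [if_pos h]
      exact MeasurableSet.iUnion fun m =>
        innerF_measurable E D hE hdeg (WFam E N) (fun q' => ih q')
          (fun q' g hg => (WFam_cyc E N q' hg).2) q m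
    · rw [if_neg h]; exact MeasurableSet.empty

lemma MFam_measurable (hE : MeasurableSet E)
    (hdeg : ∀ v : V, {w | (v, w) ∈ E}.Finite ∧ {w | (v, w) ∈ E}.ncard ≤ D)
    (q : ℕ) : MeasurableSet (MFam E q) := WFam_measurable E D hE hdeg (q+1) q

lemma MFam_cyc {q : ℕ} {f : Fin (q+3) → V} (hf : f ∈ MFam E q) : cyc E q f :=
  WFam_cyc E (q+1) q hf

lemma MFam_disj_same (hdeg : ∀ v : V, {w | (v, w) ∈ E}.Finite ∧ {w | (v, w) ∈ E}.ncard ≤ D)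
    {n : ℕ} {f g : Fin (n+3) → V} (hf : f ∈ MFam E n) (hg : g ∈ MFam E n)
    (hm : meets f g) (hne : f ≠ g) : False := by
  rw [MFam_eq_selN] at hf hg
  obtain ⟨m1, hm1⟩ := Set.mem_iUnion.mp hf
  obtain ⟨m2, hm2⟩ := Set.mem_iUnion.mp hg
  exact innerF_disj E D hdeg (WFam E n) n (max m1 m2)
    (innerF_mono E _ n (le_max_left m1 m2) hm1)
    (innerF_mono E _ n (le_max_right m1 m2) hm2) hm hne

lemma MFam_disj_lt (hdeg : ∀ v : V, {w | (v, w) ∈ E}.Finite ∧ {w | (v, w) ∈ E}.ncard ≤ D)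
    {n q : ℕ} (hnq : n < q) {f : Fin (n+3) → V} {g : Fin (q+3) → V}
    (hf : f ∈ MFam E n) (hg : g ∈ MFam E q) (hm : meets f g) : False := by
  rw [MFam_eq_selN] at hg
  obtain ⟨m, hmem⟩ := Set.mem_iUnion.mp hg
  refine innerF_notBlocked E (WFam E q) q m hmem ⟨n, f, ?_, meets_symm hm⟩
  rw [WFam_stable E hnq]
  exact hf

lemma MFam_max (hdeg : ∀ v : V, {w | (v, w) ∈ E}.Finite ∧ {w | (v, w) ∈ E}.ncard ≤ D)
    {n : ℕ} {f : Fin (n+3) → V} (hcyc : cyc E n f) :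
    ∃ q, ∃ g ∈ MFam E q, meets f g := by
  by_cases hblocked : isBlocked (WFam E n) f
  · obtain ⟨q, g, hgW, hm⟩ := hblocked
    exact ⟨q, g, WFam_subset_MFam E n q hgW, hm⟩
  by_cases hmeet : ∃ g ∈ innerF E (WFam E n) n (colorFn E n f), meets f g
  · obtain ⟨g, hg, hm⟩ := hmeet
    refine ⟨n, g, ?_, hm⟩
    rw [MFam_eq_selN]
    exact Set.mem_iUnion.mpr ⟨colorFn E n f, hg⟩
  · have hf : f ∈ innerF E (WFam E n) n (colorFn E n f + 1) :=
      Or.inr ⟨hcyc, rfl, hblocked, fun g hg hm => hmeet ⟨g, hg, hm⟩⟩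
    refine ⟨n, f, ?_, meets_self f⟩
    rw [MFam_eq_selN]
    exact Set.mem_iUnion.mpr ⟨colorFn E n f + 1, hf⟩

end C5

section C6

lemma even_ncard_biUnion_finset {ι α : Type*} (T : Finset ι) (K : ι → Set α)
    (hfin : ∀ C ∈ T, (K C).Finite) (heven : ∀ C ∈ T, Even (K C).ncard)
    (hdisj : ∀ C ∈ T, ∀ C' ∈ T, C ≠ C' → Disjoint (K C) (K C')) :
    Even (⋃ C ∈ (T : Set ι), K C).ncard := by
  induction T using Finset.induction_on with
  | empty => simp
  | @insert a T ha ih =>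
    have hstep : ⋃ C ∈ ((insert a T : Finset ι) : Set ι), K C =
        K a ∪ ⋃ C ∈ (T : Set ι), K C := by
      rw [Finset.coe_insert, Set.biUnion_insert]
    rw [hstep]
    have hTfin : (⋃ C ∈ (T : Set ι), K C).Finite :=
      Set.Finite.biUnion T.finite_toSet (fun C hC => hfin C (Finset.mem_insert_of_mem hC))
    have hafin : (K a).Finite := hfin a (Finset.mem_insert_self a T)
    have hdisj' : Disjoint (K a) (⋃ C ∈ (T : Set ι), K C) := by
      rw [Set.disjoint_iUnion₂_right]
      intro C hC
      refine hdisj a (Finset.mem_insert_self a T) C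
        (Finset.mem_insert_of_mem hC) (fun h => ha (h ▸ hC))
    rw [Set.ncard_union_eq hdisj' hafin hTfin]
    refine Even.add (heven a (Finset.mem_insert_self a T)) ?_
    exact ih (fun C hC => hfin C (Finset.mem_insert_of_mem hC))
      (fun C hC => heven C (Finset.mem_insert_of_mem hC))
      (fun C hC C' hC' hne => hdisj C (Finset.mem_insert_of_mem hC) C'
        (Finset.mem_insert_of_mem hC') hne)

end C6

section C7
variable {V : Type*} [MeasurableSpace V] [StandardBorelSpace V]
variable (E : Set (V × V)) (D : ℕ)

lemma fin_add_one_ne_sub_one (n : ℕ) (iv : Fin (n+3)) : iv + 1 ≠ iv - 1 := by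
  intro h
  have h2 : iv + 1 + 1 = iv := by rw [h, sub_add_cancel]
  have h3 : iv + 2 = iv := by
    have e : (1 + 1 : Fin (n+3)) = 2 := Fin.ext (by simp [Fin.val_add, Fin.val_one, Fin.val_two])
    rw [add_assoc, e] at h2; exact h2
  have h4 : (2 : Fin (n+3)) = 0 := add_left_cancel (h3.trans (add_zero iv).symm)
  simp [Fin.ext_iff] at h4
  rw [Nat.mod_eq_of_lt (by omega)] at h4
  exact absurd h4 (by norm_num)

lemma mem_cycEdges_iff {n : ℕ} (g : Fin (n+3) → V) (p : V × V) :
    p ∈ cycEdges (⟨n, g⟩ : (n : ℕ) × (Fin (n+3) → V)) ↔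
    ∃ i : Fin (n+3), (p.1 = g i ∧ p.2 = g (i+1)) ∨ (p.1 = g (i+1) ∧ p.2 = g i) := by
  constructor
  · rintro ⟨i, h | h⟩
    · exact ⟨i, Or.inl ⟨congrArg Prod.fst h, congrArg Prod.snd h⟩⟩
    · exact ⟨i, Or.inr ⟨congrArg Prod.fst h, congrArg Prod.snd h⟩⟩
  · rintro ⟨i, ⟨h1, h2⟩ | ⟨h1, h2⟩⟩
    · exact ⟨i, Or.inl (Prod.ext h1 h2)⟩
    · exact ⟨i, Or.inr (Prod.ext h1 h2)⟩

open Fin.CommRing in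
lemma KC_pair {n : ℕ} {g : Fin (n+3) → V} (hg : Function.Injective g) {v w0 : V}
    (h0 : (v, w0) ∈ cycEdges (⟨n, g⟩ : (n : ℕ) × (Fin (n+3) → V))) :
    ∃ iv : Fin (n+3), g iv = v ∧
      {w | (v, w) ∈ cycEdges (⟨n, g⟩ : (n : ℕ) × (Fin (n+3) → V))} = {g (iv+1), g (iv-1)} := by
  rw [mem_cycEdges_iff] at h0
  obtain ⟨i, hcase⟩ := h0
  rcases hcase with ⟨h1, -⟩ | ⟨h1, -⟩
  ·
    refine ⟨i, h1.symm, ?_⟩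
    ext w
    rw [Set.mem_setOf_eq, mem_cycEdges_iff]
    constructor
    · rintro ⟨i', ⟨ha, hb⟩ | ⟨ha, hb⟩⟩
      · obtain rfl : i' = i := hg (ha.symm.trans h1)
        exact Or.inl hb
      · have hiv : i' + 1 = i := hg (ha.symm.trans h1)
        have : i' = i - 1 := by rw [← hiv]; ring
        rw [this] at hb
        exact Or.inr hb
    · rintro (rfl | rfl)
      · exact ⟨i, Or.inl ⟨h1.symm ▸ rfl, rfl⟩⟩
      · refine ⟨i - 1, Or.inr ⟨?_, rfl⟩⟩
        rw [sub_add_cancel, ← h1]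
  ·
    refine ⟨i + 1, h1.symm, ?_⟩
    ext w
    rw [Set.mem_setOf_eq, mem_cycEdges_iff]
    constructor
    · rintro ⟨i', ⟨ha, hb⟩ | ⟨ha, hb⟩⟩
      · obtain rfl : i' = i + 1 := hg (ha.symm.trans h1)
        exact Or.inl hb
      · have hiv : i' + 1 = i + 1 := hg (ha.symm.trans h1)
        have : i' = (i + 1) - 1 := by rw [← hiv]; ring
        rw [this] at hb
        exact Or.inr hb
    · rintro (rfl | rfl)
      · exact ⟨i + 1, Or.inl ⟨h1.symm ▸ rfl, rfl⟩⟩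
      · refine ⟨(i + 1) - 1, Or.inr ⟨?_, rfl⟩⟩
        rw [sub_add_cancel, ← h1]

lemma U_eq (𝔐 : Set ((n : ℕ) × (Fin (n + 3) → V))) (h𝔐 : 𝔐 = {C | C.2 ∈ MFam E C.1}) :
    ⋃ C ∈ 𝔐, cycEdges C =
    ⋃ q, {p : V × V | ∃ g, g ∈ MFam E q ∧
      ∃ i : Fin (q+3), (p.1 = g i ∧ p.2 = g (i+1)) ∨ (p.1 = g (i+1) ∧ p.2 = g i)} := by
  subst h𝔐
  ext p
  simp only [Set.mem_iUnion, Set.mem_setOf_eq]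
  constructor
  · rintro ⟨⟨q, g⟩, hC, hp⟩
    exact ⟨q, g, hC, (mem_cycEdges_iff g p).mp hp⟩
  · rintro ⟨q, g, hg, hp⟩
    exact ⟨⟨q, g⟩, hg, (mem_cycEdges_iff g p).mpr hp⟩

lemma U_measurable (hE : MeasurableSet E)
    (hdeg : ∀ v : V, {w | (v, w) ∈ E}.Finite ∧ {w | (v, w) ∈ E}.ncard ≤ D) (q : ℕ) :
    MeasurableSet {p : V × V | ∃ g, g ∈ MFam E q ∧
      ∃ i : Fin (q+3), (p.1 = g i ∧ p.2 = g (i+1)) ∨ (p.1 = g (i+1) ∧ p.2 = g i)} := by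
  set R : Set ((V × V) × (Fin (q+3) → V)) := {a | a.2 ∈ MFam E q ∧
    ∃ i : Fin (q+3), (a.1.1 = a.2 i ∧ a.1.2 = a.2 (i+1)) ∨
      (a.1.1 = a.2 (i+1) ∧ a.1.2 = a.2 i)} with hRdef
  have hR : MeasurableSet R := by
    have hReq : R = {a : (V × V) × (Fin (q+3) → V) | a.2 ∈ MFam E q} ∩
        ⋃ i : Fin (q+3),
          (({a : (V × V) × (Fin (q+3) → V) | a.1.1 = a.2 i} ∩
            {a | a.1.2 = a.2 (i+1)}) ∪
           ({a : (V × V) × (Fin (q+3) → V) | a.1.1 = a.2 (i+1)} ∩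
            {a | a.1.2 = a.2 i})) := by
      ext a
      simp only [hRdef, Set.mem_inter_iff, Set.mem_iUnion, Set.mem_union, Set.mem_setOf_eq]
    rw [hReq]
    refine MeasurableSet.inter (measurable_snd (MFam_measurable E D hE hdeg q)) ?_
    refine MeasurableSet.iUnion fun i => MeasurableSet.union
      (MeasurableSet.inter ?_ ?_) (MeasurableSet.inter ?_ ?_) <;>
      exact meas_eq_set (by fun_prop) (measurable_snd.eval)
  have hsub : ∀ p : V × V, {g | (p, g) ∈ R} ⊆
      {g : Fin (q+3) → V | (∀ j, (g j, g (j+1)) ∈ E) ∧ ∃ j, g j = p.1} := by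
    rintro p g ⟨hg1, i, ⟨h1, -⟩ | ⟨h1, -⟩⟩
    · exact ⟨(MFam_cyc E hg1).2, i, h1.symm⟩
    · exact ⟨(MFam_cyc E hg1).2, i + 1, h1.symm⟩
  have key := proj_meas (((D+1)^(q+4))^(q+3)) R hR
    (fun p => ((walkset_finite E D hdeg q p.1).1).subset (hsub p))
    (fun p => le_trans (Set.ncard_le_ncard (hsub p) (walkset_finite E D hdeg q p.1).1)
      (walkset_finite E D hdeg q p.1).2)
  exact key

end C7

/-- In a bounded degree Borel graph with all degrees even there is a Borel maximal family of
pairwise edge-disjoint finite cycles; removing their edges yields a Borel graph that is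
acyclic and still has all degrees even (and at most `Δ(G)`). -/
theorem exists_maximal_borel_family_of_disjoint_cycles
    {V : Type*} [MeasurableSpace V] [StandardBorelSpace V]
    (E : Set (V × V)) (hE : MeasurableSet E)
    (hsym : ∀ x y : V, (x, y) ∈ E → (y, x) ∈ E)
    (hirr : ∀ x : V, (x, x) ∉ E)
    (D : ℕ)
    (hdeg : ∀ v : V, {w | (v, w) ∈ E}.Finite ∧ {w | (v, w) ∈ E}.ncard ≤ D)
    (heven : ∀ v : V, Even {w | (v, w) ∈ E}.ncard) :
    ∃ 𝔐 : Set ((n : ℕ) × (Fin (n + 3) → V)),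
      MeasurableSet 𝔐 ∧
      (∀ C ∈ 𝔐, IsCycleCode E C) ∧
      (∀ C ∈ 𝔐, ∀ C' ∈ 𝔐, C ≠ C' → cycEdges C ∩ cycEdges C' = ∅) ∧
      (∀ C', IsCycleCode E C' → ∃ C ∈ 𝔐, (cycEdges C ∩ cycEdges C').Nonempty) ∧
      MeasurableSet (E \ ⋃ C ∈ 𝔐, cycEdges C) ∧
      (∀ C, ¬ IsCycleCode (E \ ⋃ C' ∈ 𝔐, cycEdges C') C) ∧
      (∀ v : V, Even {w | (v, w) ∈ E \ ⋃ C ∈ 𝔐, cycEdges C}.ncard ∧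
        {w | (v, w) ∈ E \ ⋃ C ∈ 𝔐, cycEdges C}.ncard ≤ D) := by
  
  classical
  set M : Set ((n : ℕ) × (Fin (n + 3) → V)) := {C | C.2 ∈ MFam E C.1} with hMdef
  -- basic facts
  have hmem : ∀ {q : ℕ} {g : Fin (q+3) → V}, g ∈ MFam E q → (⟨q, g⟩ :
      (n : ℕ) × (Fin (n + 3) → V)) ∈ M := fun h => h
  have hMcyc : ∀ C ∈ M, IsCycleCode E C := by
    rintro ⟨n, f⟩ hC
    obtain ⟨h1, h2⟩ := MFam_cyc E hC
    exact ⟨h1, h2⟩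
  have hpairwise : ∀ C ∈ M, ∀ C' ∈ M, C ≠ C' → cycEdges C ∩ cycEdges C' = ∅ := by
    rintro ⟨n, f⟩ hC ⟨q, g⟩ hC' hne
    by_contra hne'
    have hnonempty : (cycEdges (⟨n, f⟩ : (n : ℕ) × (Fin (n + 3) → V)) ∩
        cycEdges (⟨q, g⟩ : (n : ℕ) × (Fin (n + 3) → V))).Nonempty :=
      Set.nonempty_iff_ne_empty.mpr hne'
    have hm : meets f g := (meets_iff_cycEdges f g).mpr hnonempty
    rcases lt_trichotomy n q with h | h | h
    · exact MFam_disj_lt E D hdeg h hC hC' hm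
    · subst h
      have hfg : f ≠ g := fun hh => hne (by rw [hh])
      exact MFam_disj_same E D hdeg hC hC' hm hfg
    · exact MFam_disj_lt E D hdeg h hC' hC (meets_symm hm)
  have hmax : ∀ C', IsCycleCode E C' → ∃ C ∈ M, (cycEdges C ∩ cycEdges C').Nonempty := by
    rintro ⟨n, f⟩ hcyc'
    have hcyc : cyc E n f := ⟨hcyc'.1, hcyc'.2⟩
    obtain ⟨q, g, hg, hm⟩ := MFam_max E D hdeg hcyc
    exact ⟨⟨q, g⟩, hg, (meets_iff_cycEdges g f).mp (meets_symm hm)⟩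
  have hUmeas : MeasurableSet (⋃ C ∈ M, cycEdges C) := by
    rw [U_eq E M hMdef]
    exact MeasurableSet.iUnion fun q => U_measurable E D hE hdeg q
  refine ⟨M, ?_, hMcyc, hpairwise, hmax, hE.diff hUmeas, ?_, ?_⟩
  · exact measurableSet_sigma_iff'.mpr fun n => MFam_measurable E D hE hdeg n
  · -- acyclicity
    rintro ⟨n, f⟩ hC
    have hcyc : cyc E n f := ⟨hC.1, fun i => (hC.2 i).1⟩
    obtain ⟨q, g, hg, hm⟩ := MFam_max E D hdeg hcyc
    obtain ⟨i, j, hcombo⟩ := hm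
    have hedgeU : (f i, f (i+1)) ∈ ⋃ C' ∈ M, cycEdges C' := by
      refine Set.mem_biUnion (hmem hg) ?_
      rw [mem_cycEdges_iff]
      rcases hcombo with ⟨h1, h2⟩ | ⟨h1, h2⟩
      · exact ⟨j, Or.inl ⟨h1, h2⟩⟩
      · exact ⟨j, Or.inr ⟨h1, h2⟩⟩
    exact (hC.2 i).2 hedgeU
  · -- parity and degree bound
    intro v
    set Ev : Set V := {w | (v, w) ∈ E} with hEvdef
    set Tv : Set V := {w | (v, w) ∈ ⋃ C ∈ M, cycEdges C} with hTvdef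
    have hEvfin : Ev.Finite := (hdeg v).1
    set KC : ((n : ℕ) × (Fin (n + 3) → V)) → Set V :=
      fun C => {w | (v, w) ∈ cycEdges C} with hKCdef
    set S : Set ((n : ℕ) × (Fin (n + 3) → V)) := {C | C ∈ M ∧ (KC C).Nonempty} with hSdef
    have hTv_eq : Tv = ⋃ C ∈ S, KC C := by
      ext w
      simp only [hTvdef, hSdef, hKCdef, Set.mem_setOf_eq, Set.mem_iUnion]
      constructor
      · rintro ⟨C, hC, hw⟩
        exact ⟨C, ⟨hC, w, hw⟩, hw⟩
      · rintro ⟨C, ⟨hC, -⟩, hw⟩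
        exact ⟨C, hC, hw⟩
    have hKC_sub : ∀ C ∈ S, KC C ⊆ Ev := by
      rintro ⟨q, g⟩ ⟨hC, -⟩ w hw
      rw [hKCdef, Set.mem_setOf_eq, mem_cycEdges_iff] at hw
      obtain ⟨i, ⟨h1, h2⟩ | ⟨h1, h2⟩⟩ := hw
      · have hedge : (g i, g (i+1)) ∈ E := (MFam_cyc E hC).2 i
        show (v, w) ∈ E
        rw [show v = g i from h1, show w = g (i+1) from h2]
        exact hedge
      · have hedge : (g (i+1), g i) ∈ E := hsym _ _ ((MFam_cyc E hC).2 i)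
        show (v, w) ∈ E
        rw [show v = g (i+1) from h1, show w = g i from h2]
        exact hedge
    have hKC_two : ∀ C ∈ S, (KC C).Finite ∧ (KC C).ncard = 2 := by
      rintro ⟨q, g⟩ ⟨hC, w0, hw0⟩
      have hinj : Function.Injective g := (MFam_cyc E hC).1
      obtain ⟨iv, -, hKCeq⟩ := KC_pair hinj hw0
      have hne : g (iv + 1) ≠ g (iv - 1) :=
        fun h => fin_add_one_ne_sub_one q iv (hinj h)
      constructor
      · rw [hKCdef]
        simp only []
        rw [show {w | (v, w) ∈ cycEdges (⟨q, g⟩ : (n : ℕ) × (Fin (n + 3) → V))} =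
          {g (iv+1), g (iv-1)} from hKCeq]
        exact (Set.finite_singleton _).insert _
      · rw [hKCdef]
        simp only []
        rw [show {w | (v, w) ∈ cycEdges (⟨q, g⟩ : (n : ℕ) × (Fin (n + 3) → V))} =
          {g (iv+1), g (iv-1)} from hKCeq]
        exact Set.ncard_pair hne
    have hKC_disj : ∀ C ∈ S, ∀ C' ∈ S, C ≠ C' → Disjoint (KC C) (KC C') := by
      rintro C ⟨hC, -⟩ C' ⟨hC', -⟩ hne
      rw [Set.disjoint_left]
      intro w hw hw'
      have : (v, w) ∈ cycEdges C ∩ cycEdges C' := ⟨hw, hw'⟩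
      rw [hpairwise C hC C' hC' hne] at this
      exact this
    have hSfin : S.Finite := by
      have himfin : (KC '' S).Finite :=
        (Set.Finite.finite_subsets hEvfin).subset (by
          rintro A ⟨C, hC, rfl⟩
          exact hKC_sub C hC)
      refine Set.Finite.of_finite_image himfin ?_
      intro C hC C' hC' heq
      by_contra hne
      obtain ⟨w, hw⟩ := hC.2
      have hw' : w ∈ KC C' := heq ▸ hw
      exact Set.disjoint_left.mp (hKC_disj C hC C' hC' hne) hw hw'
    have hTvEven : Even Tv.ncard := by
      rw [hTv_eq, ← hSfin.coe_toFinset]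
      refine even_ncard_biUnion_finset hSfin.toFinset KC ?_ ?_ ?_
      · intro C hC
        exact (hKC_two C (hSfin.mem_toFinset.mp hC)).1
      · intro C hC
        rw [(hKC_two C (hSfin.mem_toFinset.mp hC)).2]
        exact even_two
      · intro C hC C' hC' hne
        exact hKC_disj C (hSfin.mem_toFinset.mp hC) C' (hSfin.mem_toFinset.mp hC') hne
    have hTv_sub : Tv ⊆ Ev := by
      rw [hTv_eq]
      exact Set.iUnion₂_subset hKC_sub
    have hsplit : {w | (v, w) ∈ E \ ⋃ C ∈ M, cycEdges C} = Ev \ Tv := rfl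
    rw [hsplit]
    have hdiffcard : (Ev \ Tv).ncard = Ev.ncard - Tv.ncard :=
      Set.ncard_diff hTv_sub (hEvfin.subset hTv_sub)
    constructor
    · rw [hdiffcard]
      rw [Nat.even_sub (Set.ncard_le_ncard hTv_sub hEvfin)]
      exact iff_of_true (heven v) hTvEven
    · exact le_trans (Set.ncard_le_ncard Set.diff_subset hEvfin) (hdeg v).2
end

section
/- Let G = (V, E) be a Borel graph of bounded maximum degree Δ(G) and let μ be a Borel probability measure on V. Then there exists a G-quasi-invariant Borel probability measure ν on V such that μ(A) ≤ 2ν(A) for every Borel set A ⊆ V. -/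
open MeasureTheory Set

universe u

/-- Fiber of the first projection over `a` as an image. -/
lemma aux_fiber_fst_eq {α β : Type*} (s : Set (α × β)) (a : α) :
    {p ∈ s | p.1 = a} = (fun y => (a, y)) '' {y | (a, y) ∈ s} := by
  ext ⟨x, y⟩
  constructor
  · rintro ⟨hs, rfl⟩
    exact ⟨y, hs, rfl⟩
  · rintro ⟨y', hy', heq⟩
    cases heq
    exact ⟨hy', rfl⟩

lemma aux_fiber_snd_eq {α β : Type*} (s : Set (α × β)) (b : β) :
    {p ∈ s | p.2 = b} = (fun x => (x, b)) '' {x | (x, b) ∈ s} := by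
  ext ⟨x, y⟩
  constructor
  · rintro ⟨hs, rfl⟩
    exact ⟨x, hs, rfl⟩
  · rintro ⟨x', hx', heq⟩
    cases heq
    exact ⟨hx', rfl⟩

lemma aux_mk_left_injective {α β : Type*} (a : α) :
    Function.Injective (fun y : β => (a, y)) := fun y z h => congrArg Prod.snd h

lemma aux_mk_right_injective {α β : Type*} (b : β) :
    Function.Injective (fun x : α => (x, b)) := fun y z h => congrArg Prod.fst h

/-- Baby Luzin–Novikov: the image of a Borel set under a Borel map with fibers of
size at most `D` (within the set) is Borel. -/
theorem measurableSet_image_of_bounded_fibers (D : ℕ) :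
    ∀ {γ α : Type u} [MeasurableSpace γ] [StandardBorelSpace γ]
      [MeasurableSpace α] [StandardBorelSpace α]
      (f : γ → α), Measurable f → ∀ (s : Set γ), MeasurableSet s →
      (∀ a : α, ({x ∈ s | f x = a}).Finite ∧ ({x ∈ s | f x = a}).ncard ≤ D) →
      MeasurableSet (f '' s) := by
  induction D with
  | zero =>
    intro γ α _ _ _ _ f hf s hs hfib
    have hse : s = ∅ := by
      ext x
      simp only [mem_empty_iff_false, iff_false]
      intro hx
      have h := hfib (f x)
      have hempty : {x' ∈ s | f x' = f x} = ∅ :=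
        (Set.ncard_eq_zero h.1).mp (Nat.le_zero.mp h.2)
      have : x ∈ {x' ∈ s | f x' = f x} := ⟨hx, rfl⟩
      rw [hempty] at this
      exact this
    rw [hse, Set.image_empty]
    exact MeasurableSet.empty
  | succ D IH =>
    intro γ α _ _ _ _ f hf s hs hfib
    have hι := measurableEmbedding_embeddingReal γ
    set ι : γ → ℝ := embeddingReal γ with hιdef
    have hj := measurableEmbedding_embeddingReal α
    set j : α → ℝ := embeddingReal α with hjdef
    -- the set of pairs of distinct points of s in the same fiber
    set T : Set (γ × γ) := {p | p.1 ∈ s ∧ p.2 ∈ s ∧ p.1 ≠ p.2 ∧ f p.1 = f p.2} with hT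
    have hTmeas : MeasurableSet T := by
      have h1 : MeasurableSet {p : γ × γ | p.1 ∈ s} := measurable_fst hs
      have h2 : MeasurableSet {p : γ × γ | p.2 ∈ s} := measurable_snd hs
      have h3 : MeasurableSet {p : γ × γ | p.1 ≠ p.2} := by
        have : {p : γ × γ | p.1 ≠ p.2} =
            ((fun p : γ × γ => ι p.1 - ι p.2) ⁻¹' {0})ᶜ := by
          ext p
          simp [sub_eq_zero, hι.injective.eq_iff]
        rw [this]
        exact (((hι.measurable.comp measurable_fst).sub
          (hι.measurable.comp measurable_snd)) (measurableSet_singleton 0)).compl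
      have h4 : MeasurableSet {p : γ × γ | f p.1 = f p.2} := by
        have : {p : γ × γ | f p.1 = f p.2} =
            (fun p : γ × γ => j (f p.1) - j (f p.2)) ⁻¹' {0} := by
          ext p
          simp [sub_eq_zero, hj.injective.eq_iff]
        rw [this]
        exact ((hj.measurable.comp (hf.comp measurable_fst)).sub
          (hj.measurable.comp (hf.comp measurable_snd))) (measurableSet_singleton 0)
      have : T = ({p : γ × γ | p.1 ∈ s} ∩ {p | p.2 ∈ s}) ∩
          ({p : γ × γ | p.1 ≠ p.2} ∩ {p | f p.1 = f p.2}) := by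
        ext p; simp [hT]; tauto
      rw [this]
      exact (h1.inter h2).inter (h3.inter h4)
    set T' : Set (γ × γ) := T ∩ {p | ι p.2 < ι p.1} with hT'
    have hT'meas : MeasurableSet T' :=
      hTmeas.inter (measurableSet_lt (hι.measurable.comp measurable_snd)
        (hι.measurable.comp measurable_fst))
    -- fiber bounds for Prod.fst on T and T'
    have hfibT : ∀ U : Set (γ × γ), U ⊆ T →
        ∀ a : γ, ({p ∈ U | p.1 = a}).Finite ∧ ({p ∈ U | p.1 = a}).ncard ≤ D := by
      intro U hU a
      have hfa := hfib (f a)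
      rw [aux_fiber_fst_eq]
      set Y : Set γ := {y | (a, y) ∈ U} with hY
      have hinj := aux_mk_left_injective (β := γ) a
      by_cases has : a ∈ s
      · have hYsub : Y ⊆ {x ∈ s | f x = f a} \ {a} := by
          intro y hy
          obtain ⟨_, hy2, hy3, hy4⟩ := hU hy
          exact ⟨⟨hy2, hy4.symm⟩, fun h => hy3 (Set.mem_singleton_iff.mp h).symm⟩
        have hYfin : Y.Finite := hfa.1.diff.subset hYsub
        refine ⟨hYfin.image _, ?_⟩
        rw [Set.ncard_image_of_injective _ hinj]
        have h1 : Y.ncard ≤ ({x ∈ s | f x = f a} \ {a}).ncard :=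
          Set.ncard_le_ncard hYsub hfa.1.diff
        have h2 : ({x ∈ s | f x = f a} \ {a}).ncard < ({x ∈ s | f x = f a}).ncard :=
          Set.ncard_diff_singleton_lt_of_mem ⟨has, rfl⟩ hfa.1
        omega
      · have hYe : Y = ∅ := by
          ext y
          simp only [mem_empty_iff_false, iff_false]
          intro hy
          exact has (hU hy).1
        rw [hYe]
        simp
    have hA : MeasurableSet (Prod.fst '' T) :=
      IH Prod.fst measurable_fst T hTmeas (hfibT T (fun _ h => h))
    have hN : MeasurableSet (Prod.fst '' T') :=
      IH Prod.fst measurable_fst T' hT'meas (hfibT T' Set.inter_subset_left)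
    set A : Set γ := Prod.fst '' T with hA'
    set Nn : Set γ := Prod.fst '' T' with hN'
    have hAs : A ⊆ s := by
      rintro a ⟨p, hp, rfl⟩
      exact hp.1
    -- injectivity on s \ A
    have hinj1 : Set.InjOn f (s \ A) := by
      intro x hx y hy hxy
      by_contra hne
      exact hx.2 ⟨(x, y), ⟨hx.1, hy.1, hne, hxy⟩, rfl⟩
    -- injectivity on A \ N
    have hinj2 : Set.InjOn f (A \ Nn) := by
      intro x hx y hy hxy
      by_contra hne
      have hxs : x ∈ s := hAs hx.1
      have hys : y ∈ s := hAs hy.1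
      have hιne : ι x ≠ ι y := fun h => hne (hι.injective h)
      rcases lt_or_gt_of_ne hιne with h | h
      · exact hy.2 ⟨(y, x), ⟨⟨hys, hxs, fun hh => hne hh.symm, hxy.symm⟩, h⟩, rfl⟩
      · exact hx.2 ⟨(x, y), ⟨⟨hxs, hys, hne, hxy⟩, h⟩, rfl⟩
    -- the image splits
    have hsplit : f '' s = f '' (s \ A) ∪ f '' (A \ Nn) := by
      apply Set.Subset.antisymm
      · rintro _ ⟨x, hx, rfl⟩
        by_cases hxA : x ∈ A
        · -- take the minimal element of the fiber of x
          have hfx := hfib (f x)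
          have hne : ({z ∈ s | f z = f x}).Nonempty := ⟨x, hx, rfl⟩
          obtain ⟨m, hm, hmin⟩ :=
            Set.Finite.exists_minimalFor ι {z ∈ s | f z = f x} hfx.1 hne
          refine Or.inr ⟨m, ⟨?_, ?_⟩, hm.2⟩
          · -- m ∈ A
            obtain ⟨⟨x', y'⟩, hp, hfst⟩ := hxA
            simp only at hfst
            by_cases hmx : m = x
            · have hmem : (m, y') ∈ T := by
                refine ⟨hm.1, hp.2.1, ?_, ?_⟩
                · show m ≠ y'
                  rw [hmx, ← hfst]
                  exact hp.2.2.1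
                · show f m = f y'
                  rw [hmx, ← hfst]
                  exact hp.2.2.2
              exact ⟨(m, y'), hmem, rfl⟩
            · have hmem : (m, x) ∈ T := ⟨hm.1, hx, hmx, hm.2⟩
              exact ⟨(m, x), hmem, rfl⟩
          · -- m ∉ N
            rintro ⟨⟨m', z⟩, ⟨hpT, hlt⟩, hfst⟩
            simp only at hfst
            subst hfst
            have hzfib : z ∈ {z ∈ s | f z = f x} := ⟨hpT.2.1, by rw [← hpT.2.2.2, hm.2]⟩
            have := hmin hzfib (le_of_lt hlt)
            exact absurd this (not_le_of_gt hlt)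
        · exact Or.inl ⟨x, ⟨hx, hxA⟩, rfl⟩
      · rintro _ (⟨x, hx, rfl⟩ | ⟨x, hx, rfl⟩)
        · exact ⟨x, hx.1, rfl⟩
        · exact ⟨x, hAs hx.1, rfl⟩
    rw [hsplit]
    exact ((hs.diff hA).image_of_measurable_injOn hf hinj1).union
      ((hA.diff hN).image_of_measurable_injOn hf hinj2)

open scoped ENNReal

lemma aux_pi_bound {V : Type*} {S : Set V} (hS : S.Finite) (k : ℕ) :
    {h : Fin k → V | ∀ i, h i ∈ S}.Finite ∧
      {h : Fin k → V | ∀ i, h i ∈ S}.ncard ≤ S.ncard ^ k := by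
  haveI := hS.to_subtype
  have hrange : {h : Fin k → V | ∀ i, h i ∈ S} =
      Set.range (fun (g : Fin k → S) (i : Fin k) => (g i : V)) := by
    ext h
    constructor
    · intro hh
      exact ⟨fun i => ⟨h i, hh i⟩, rfl⟩
    · rintro ⟨g, rfl⟩ i
      exact (g i).2
  rw [hrange, ← Set.image_univ]
  refine ⟨Set.finite_univ.image _, ?_⟩
  calc ((fun (g : Fin k → S) (i : Fin k) => (g i : V)) '' Set.univ).ncard
      ≤ (Set.univ : Set (Fin k → S)).ncard := Set.ncard_image_le Set.finite_univ
    _ = Nat.card (Fin k → S) := Set.ncard_univ _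
    _ = Nat.card S ^ k := by rw [Nat.card_fun]; simp
    _ = S.ncard ^ k := by rw [Nat.card_coe_set_eq]

lemma aux_tsum_indicator {V : Type*} {A : Set V} (hA : A.Finite) :
    ∑' w : V, A.indicator (fun _ => (1 : ℝ≥0∞)) w = A.ncard := by
  rw [tsum_eq_sum (s := hA.toFinset)
    (fun b hb => Set.indicator_of_notMem (fun hbA => hb (hA.mem_toFinset.mpr hbA)) _)]
  rw [Set.ncard_eq_toFinset_card A hA]
  rw [Finset.sum_congr rfl (fun b hb => Set.indicator_of_mem (hA.mem_toFinset.mp hb) _)]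
  simp

lemma aux_indicator_iUnion {V : Type*} (A : ℕ → Set V) (hd : Pairwise (Function.onFun Disjoint A)) (w : V) :
    (⋃ i, A i).indicator (fun _ => (1 : ℝ≥0∞)) w
      = ∑' i, (A i).indicator (fun _ => (1 : ℝ≥0∞)) w := by
  by_cases hw : w ∈ ⋃ i, A i
  · obtain ⟨i₀, hi₀⟩ := Set.mem_iUnion.mp hw
    rw [Set.indicator_of_mem hw, tsum_eq_single i₀
      (fun j hj => Set.indicator_of_notMem
        (fun hjw => Set.disjoint_left.mp (hd hj) hjw hi₀) _)]
    rw [Set.indicator_of_mem hi₀]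
  · rw [Set.indicator_of_notMem hw]
    symm
    rw [tsum_congr (fun i => Set.indicator_of_notMem
      (fun hi => hw (Set.mem_iUnion.mpr ⟨i, hi⟩)) _)]
    exact tsum_zero

lemma aux_ncard_inter_iUnion {V : Type*} {S : Set V} (hS : S.Finite) (A : ℕ → Set V)
    (hd : Pairwise (Function.onFun Disjoint A)) :
    ((S ∩ ⋃ i, A i).ncard : ℝ≥0∞) = ∑' i, ((S ∩ A i).ncard : ℝ≥0∞) := by
  have hd' : Pairwise (Function.onFun Disjoint fun i => S ∩ A i) := fun i j hij =>
    (hd hij).mono Set.inter_subset_right Set.inter_subset_right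
  have hfin : (⋃ i, S ∩ A i).Finite :=
    hS.subset (Set.iUnion_subset fun i => Set.inter_subset_left)
  rw [Set.inter_iUnion, ← aux_tsum_indicator hfin]
  rw [tsum_congr (fun w => aux_indicator_iUnion (fun i => S ∩ A i) hd' w)]
  rw [ENNReal.tsum_comm]
  exact tsum_congr fun i => aux_tsum_indicator (hS.inter_of_left _)

/-- Connectedness relation of the graph with edge set `E`. -/
def Reaches {V : Type*} (E : Set (V × V)) : V → V → Prop :=
  Relation.ReflTransGen (fun x y : V => (x, y) ∈ E)

/-- The `G`-saturation of a set `A`: the union of the connected components meeting `A`. -/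
def Saturation {V : Type*} (E : Set (V × V)) (A : Set V) : Set V :=
  {w : V | ∃ a ∈ A, Reaches E a w}

/-- A measure is `G`-quasi-invariant if a Borel set is null iff its saturation is null. -/
def QuasiInvariant {V : Type*} [MeasurableSpace V] (E : Set (V × V)) (μ : Measure V) : Prop :=
  ∀ A : Set V, MeasurableSet A → (μ A = 0 ↔ μ (Saturation E A) = 0)

/-- For every bounded degree Borel graph and every Borel probability measure `μ` there is a
`G`-quasi-invariant Borel probability measure `ν` with `μ(A) ≤ 2ν(A)` for all Borel `A`. -/
theorem exists_quasiInvariant_majorant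
    {V : Type*} [MeasurableSpace V] [StandardBorelSpace V]
    (E : Set (V × V)) (hE : MeasurableSet E)
    (hsym : ∀ x y : V, (x, y) ∈ E → (y, x) ∈ E)
    (hirr : ∀ x : V, (x, x) ∉ E)
    (D : ℕ)
    (hdeg : ∀ v : V, {w | (v, w) ∈ E}.Finite ∧ {w | (v, w) ∈ E}.ncard ≤ D)
    (μ : Measure V) [IsProbabilityMeasure μ] :
    ∃ ν : Measure V, IsProbabilityMeasure ν ∧ QuasiInvariant E ν ∧
      ∀ A : Set V, MeasurableSet A → μ A ≤ 2 * ν A := by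
  classical
  have hι := measurableEmbedding_embeddingReal V
  set ι : V → ℝ := embeddingReal V with hιdef
  set Nb : V → Set V := fun v => {w | (v, w) ∈ E} with hNb
  set eS : Set V → Set V := fun B => Prod.snd '' (E ∩ B ×ˢ Set.univ) with heS
  have heSmem : ∀ (B : Set V) (w : V), w ∈ eS B ↔ ∃ b ∈ B, (b, w) ∈ E := by
    intro B w
    constructor
    · rintro ⟨⟨b, w'⟩, ⟨hbE, hbB, -⟩, rfl⟩
      exact ⟨b, hbB, hbE⟩
    · rintro ⟨b, hbB, hbE⟩
      exact ⟨(b, w), ⟨hbE, hbB, trivial⟩, rfl⟩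
  have heSmeas : ∀ B : Set V, MeasurableSet B → MeasurableSet (eS B) := by
    intro B hB
    apply measurableSet_image_of_bounded_fibers D Prod.snd measurable_snd _
      (hE.inter (hB.prod MeasurableSet.univ))
    intro w
    rw [aux_fiber_snd_eq]
    have hsub : {x | (x, w) ∈ E ∩ B ×ˢ Set.univ} ⊆ Nb w := by
      intro x hx
      exact hsym x w hx.1
    have hfinw := (hdeg w).1
    refine ⟨(hfinw.subset hsub).image _, ?_⟩
    rw [Set.ncard_image_of_injective _ (aux_mk_right_injective w)]
    exact le_trans (Set.ncard_le_ncard hsub hfinw) (hdeg w).2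
  -- measurability of the counting level sets
  have hcnt : ∀ B : Set V, MeasurableSet B → ∀ k : ℕ,
      MeasurableSet {v | k ≤ (Nb v ∩ B).ncard} := by
    intro B hB k
    rcases Nat.eq_zero_or_pos k with rfl | hk
    · simpa using MeasurableSet.univ
    set W : Set (V × (Fin k → V)) :=
      {p | (∀ i, (p.1, p.2 i) ∈ E ∧ p.2 i ∈ B) ∧
        ∀ i j : Fin k, i < j → ι (p.2 i) < ι (p.2 j)} with hW
    have hWmeas : MeasurableSet W := by
      have h1 : MeasurableSet {p : V × (Fin k → V) | ∀ i, (p.1, p.2 i) ∈ E ∧ p.2 i ∈ B} := by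
        have heq : {p : V × (Fin k → V) | ∀ i, (p.1, p.2 i) ∈ E ∧ p.2 i ∈ B} =
            ⋂ i, ((fun p : V × (Fin k → V) => (p.1, p.2 i)) ⁻¹' E ∩
              (fun p : V × (Fin k → V) => p.2 i) ⁻¹' B) := by
          ext p
          simp only [Set.mem_setOf_eq, Set.mem_iInter, Set.mem_inter_iff, Set.mem_preimage]
        rw [heq]
        refine MeasurableSet.iInter fun i => MeasurableSet.inter ?_ ?_
        · exact (measurable_fst.prodMk ((measurable_pi_apply i).comp measurable_snd)) hE
        · exact ((measurable_pi_apply i).comp measurable_snd) hB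
      have h2 : MeasurableSet
          {p : V × (Fin k → V) | ∀ i j : Fin k, i < j → ι (p.2 i) < ι (p.2 j)} := by
        have heq : {p : V × (Fin k → V) | ∀ i j : Fin k, i < j → ι (p.2 i) < ι (p.2 j)} =
            ⋂ (i : Fin k), ⋂ (j : Fin k), ⋂ (_ : i < j),
              {p : V × (Fin k → V) | ι (p.2 i) < ι (p.2 j)} := by
          ext p
          simp only [Set.mem_setOf_eq, Set.mem_iInter]
        rw [heq]
        refine MeasurableSet.iInter fun i => MeasurableSet.iInter fun j =>
          MeasurableSet.iInter fun _ => measurableSet_lt ?_ ?_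
        · exact hι.measurable.comp ((measurable_pi_apply i).comp measurable_snd)
        · exact hι.measurable.comp ((measurable_pi_apply j).comp measurable_snd)
      exact h1.inter h2
    have himg : {v | k ≤ (Nb v ∩ B).ncard} = Prod.fst '' W := by
      ext v
      constructor
      · intro hv
        have hSfin : (Nb v ∩ B).Finite := (hdeg v).1.inter_of_left B
        have hcard : k ≤ hSfin.toFinset.card := by
          rwa [← Set.ncard_eq_toFinset_card _ hSfin]
        obtain ⟨t, htsub, htcard⟩ := Finset.exists_subset_card_eq hcard
        have ht' : (t.image ι).card = k := by
          rw [Finset.card_image_of_injective t hι.injective, htcard]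
        set e := (t.image ι).orderIsoOfFin ht' with he
        have hpre : ∀ i : Fin k, ∃ y, y ∈ t ∧ ι y = (e i : ℝ) := by
          intro i
          have hmem := (e i).2
          rw [Finset.mem_image] at hmem
          obtain ⟨y, hy1, hy2⟩ := hmem
          exact ⟨y, hy1, hy2⟩
        choose gg hg1 hg2 using hpre
        refine ⟨(v, gg), ⟨fun i => ?_, fun i j hij => ?_⟩, rfl⟩
        · have hmem : gg i ∈ Nb v ∩ B := hSfin.mem_toFinset.mp (htsub (hg1 i))
          exact ⟨hmem.1, hmem.2⟩
        · show ι (gg i) < ι (gg j)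
          rw [hg2 i, hg2 j]
          exact Subtype.coe_lt_coe.mpr (e.strictMono hij)
      · rintro ⟨⟨v', gtup⟩, ⟨hmem, hmono⟩, rfl⟩
        simp only at hmem hmono
        have hinj : Function.Injective gtup := by
          intro i j hij
          by_contra hne
          rcases lt_or_gt_of_ne hne with h | h
          · exact absurd (hmono i j h) (by rw [hij]; exact lt_irrefl _)
          · exact absurd (hmono j i h) (by rw [hij]; exact lt_irrefl _)
        have hsub : Set.range gtup ⊆ Nb v' ∩ B := by
          rintro _ ⟨i, rfl⟩
          exact ⟨(hmem i).1, (hmem i).2⟩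
        have h1 : (Set.range gtup).ncard = k := by
          rw [← Set.image_univ, Set.ncard_image_of_injective _ hinj, Set.ncard_univ]
          simp
        calc k = (Set.range gtup).ncard := h1.symm
          _ ≤ (Nb v' ∩ B).ncard :=
              Set.ncard_le_ncard hsub ((hdeg v').1.inter_of_left B)
    rw [himg]
    apply measurableSet_image_of_bounded_fibers (D ^ k) Prod.fst measurable_fst _ hWmeas
    intro v
    rw [aux_fiber_fst_eq]
    have hsub : {h | (v, h) ∈ W} ⊆ {h : Fin k → V | ∀ i, h i ∈ Nb v} := by
      intro h hh i
      exact (hh.1 i).1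
    obtain ⟨hfin, hcard⟩ := aux_pi_bound (hdeg v).1 k
    refine ⟨(hfin.subset hsub).image _, ?_⟩
    rw [Set.ncard_image_of_injective _ (aux_mk_left_injective v)]
    calc {h | (v, h) ∈ W}.ncard ≤ {h : Fin k → V | ∀ i, h i ∈ Nb v}.ncard :=
        Set.ncard_le_ncard hsub hfin
      _ ≤ (Nb v).ncard ^ k := hcard
      _ ≤ D ^ k := Nat.pow_le_pow_left (hdeg v).2 k
  -- the counting function
  set g : Set V → V → ℝ≥0∞ := fun B v => ((Nb v ∩ B).ncard : ℝ≥0∞) with hg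
  have hgfin : ∀ (v : V) (B : Set V), (Nb v ∩ B).Finite :=
    fun v B => (hdeg v).1.inter_of_left B
  have hgle : ∀ (B : Set V) (v : V), g B v ≤ (D : ℝ≥0∞) := by
    intro B v
    have h : (Nb v ∩ B).ncard ≤ D :=
      le_trans (Set.ncard_le_ncard Set.inter_subset_left (hdeg v).1) (hdeg v).2
    show ((Nb v ∩ B).ncard : ℝ≥0∞) ≤ (D : ℝ≥0∞)
    exact_mod_cast h
  have hgmeas : ∀ B : Set V, MeasurableSet B → Measurable (g B) := by
    intro B hB
    have hrepr : g B = fun v => ∑ k ∈ Finset.range D,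
        Set.indicator {v' | k + 1 ≤ (Nb v' ∩ B).ncard} (fun _ => (1 : ℝ≥0∞)) v := by
      funext v
      have hm : (Nb v ∩ B).ncard ≤ D :=
        le_trans (Set.ncard_le_ncard Set.inter_subset_left (hdeg v).1) (hdeg v).2
      simp only [Set.indicator_apply, Set.mem_setOf_eq]
      rw [Finset.sum_boole]
      have hfil : (Finset.range D).filter (fun k => k + 1 ≤ (Nb v ∩ B).ncard) =
          Finset.range ((Nb v ∩ B).ncard) := by
        ext m
        simp only [Finset.mem_filter, Finset.mem_range]
        omega
      rw [hfil, Finset.card_range]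
    rw [hrepr]
    exact Finset.measurable_sum _ fun k _ =>
      (measurable_const.indicator (hcnt B hB (k + 1)))
  have hgzero : ∀ (B : Set V) (v : V), g B v = 0 ↔ v ∉ eS B := by
    intro B v
    have h1 : v ∈ eS B ↔ (Nb v ∩ B).Nonempty := by
      rw [heSmem]
      constructor
      · rintro ⟨b, hbB, hbE⟩
        exact ⟨b, hsym b v hbE, hbB⟩
      · rintro ⟨b, hbN, hbB⟩
        exact ⟨b, hbB, hsym v b hbN⟩
    constructor
    · intro h0 hvE
      have hne := h1.mp hvE
      rw [hg] at h0
      simp only at h0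
      rw [Nat.cast_eq_zero, Set.ncard_eq_zero (hgfin v B)] at h0
      rw [h0] at hne
      exact Set.not_nonempty_empty hne
    · intro hv
      rw [hg]
      simp only
      rw [Nat.cast_eq_zero, Set.ncard_eq_zero (hgfin v B), ← Set.not_nonempty_iff_eq_empty]
      exact fun hne => hv (h1.mpr hne)
  -- the spreading operator
  have hTex : ∀ σ : Measure V, ∃ τ : Measure V,
      ∀ B : Set V, MeasurableSet B → τ B = ∫⁻ v, g B v ∂σ := by
    intro σ
    refine ⟨Measure.ofMeasurable (fun B _ => ∫⁻ v, g B v ∂σ) ?_ ?_,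
      fun B hB => Measure.ofMeasurable_apply B hB⟩
    · have h0 : ∀ v, g ∅ v = 0 := by
        intro v
        rw [hg]
        simp
      simp only [h0, lintegral_zero]
    · intro f hf hdisj
      have hadd : ∀ v, g (⋃ i, f i) v = ∑' i, g (f i) v := by
        intro v
        rw [hg]
        simp only
        exact aux_ncard_inter_iUnion (hdeg v).1 f hdisj
      calc ∫⁻ v, g (⋃ i, f i) v ∂σ = ∫⁻ v, ∑' i, g (f i) v ∂σ := lintegral_congr hadd
        _ = ∑' i, ∫⁻ v, g (f i) v ∂σ :=
            lintegral_tsum (fun i => (hgmeas (f i) (hf i)).aemeasurable)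
  choose Top hTop using hTex
  set μseq : ℕ → Measure V := fun n => Top^[n] μ with hμseq
  have hμ0 : μseq 0 = μ := rfl
  have hμsucc : ∀ n, μseq (n + 1) = Top (μseq n) := by
    intro n
    rw [hμseq]
    simp only
    rw [Function.iterate_succ_apply']
  have hmass : ∀ n, μseq n Set.univ ≤ ((D : ℝ≥0∞) + 1) ^ n := by
    intro n
    induction n with
    | zero =>
      rw [pow_zero, hμ0]
      exact le_of_eq measure_univ
    | succ n ih =>
      rw [hμsucc, hTop _ _ MeasurableSet.univ]
      calc ∫⁻ v, g Set.univ v ∂(μseq n) ≤ ∫⁻ _, (D : ℝ≥0∞) ∂(μseq n) :=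
          lintegral_mono (fun v => hgle _ v)
        _ = (D : ℝ≥0∞) * μseq n Set.univ := lintegral_const _
        _ ≤ ((D : ℝ≥0∞) + 1) * ((D : ℝ≥0∞) + 1) ^ n := mul_le_mul' le_self_add ih
        _ = ((D : ℝ≥0∞) + 1) ^ (n + 1) := by rw [pow_succ, mul_comm]
  have hTnull : ∀ (n : ℕ) (B : Set V), MeasurableSet B →
      (μseq (n + 1) B = 0 ↔ μseq n (eS B) = 0) := by
    intro n B hB
    have hsetaux : {v | ¬ g B v = (0 : ℝ≥0∞)} = eS B := by
      ext v
      simp only [Set.mem_setOf_eq]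
      constructor
      · intro h
        by_contra hvE
        exact h ((hgzero B v).mpr hvE)
      · intro hvE h0
        exact (hgzero B v).mp h0 hvE
    rw [hμsucc, hTop _ _ hB, lintegral_eq_zero_iff (hgmeas B hB)]
    rw [Filter.EventuallyEq, ae_iff]
    simp only [Pi.zero_apply]
    rw [hsetaux]
  -- weights and the candidate measure
  have hKne : ((D : ℝ≥0∞) + 1) ≠ 0 := by simp
  have hKnt : ((D : ℝ≥0∞) + 1) ≠ ⊤ := by
    exact ENNReal.add_ne_top.mpr ⟨ENNReal.natCast_ne_top D, ENNReal.one_ne_top⟩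
  have h2ne : (2 : ℝ≥0∞) ≠ 0 := by norm_num
  have h2nt : (2 : ℝ≥0∞) ≠ ⊤ := by norm_num
  have hinvmul : ∀ K : ℝ≥0∞, K ≠ 0 → K ≠ ⊤ → (2 * K)⁻¹ * K = 2⁻¹ := by
    intro K hK0 hKt
    rw [ENNReal.mul_inv (Or.inl h2ne) (Or.inl h2nt), mul_assoc,
      ENNReal.inv_mul_cancel hK0 hKt, mul_one]
  set c : ℝ≥0∞ := (2 * ((D : ℝ≥0∞) + 1))⁻¹ with hc
  have hc0 : c ≠ 0 :=
    ENNReal.inv_ne_zero.mpr (ENNReal.mul_ne_top h2nt hKnt)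
  have hcD : c * ((D : ℝ≥0∞) + 1) = 2⁻¹ := hinvmul _ hKne hKnt
  set ρ : Measure V := Measure.sum (fun n => c ^ n • μseq n) with hρ
  have hρapp : ∀ B : Set V, MeasurableSet B → ρ B = ∑' n, c ^ n * μseq n B := by
    intro B hB
    rw [hρ, Measure.sum_apply _ hB]
    simp [Measure.smul_apply, smul_eq_mul]
  set Z : ℝ≥0∞ := ρ Set.univ with hZ
  have hZ1 : 1 ≤ Z := by
    rw [hZ, hρapp _ MeasurableSet.univ]
    calc (1 : ℝ≥0∞) = c ^ 0 * μseq 0 Set.univ := by rw [pow_zero, one_mul, hμ0, measure_univ]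
      _ ≤ ∑' n, c ^ n * μseq n Set.univ := ENNReal.le_tsum 0
  have hstep : ∀ n : ℕ, c ^ n * μseq n Set.univ ≤ (2⁻¹ : ℝ≥0∞) ^ n := by
    intro n
    calc c ^ n * μseq n Set.univ ≤ c ^ n * ((D : ℝ≥0∞) + 1) ^ n :=
        mul_le_mul' le_rfl (hmass n)
      _ = (c * ((D : ℝ≥0∞) + 1)) ^ n := (mul_pow _ _ n).symm
      _ = (2⁻¹ : ℝ≥0∞) ^ n := by rw [hcD]
  have hZ2 : Z ≤ 2 := by
    rw [hZ, hρapp _ MeasurableSet.univ]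
    refine le_trans (ENNReal.tsum_le_tsum hstep) ?_
    rw [ENNReal.tsum_geometric, ENNReal.one_sub_inv_two, inv_inv]
  have hZnt : Z ≠ ⊤ := ne_top_of_le_ne_top h2nt hZ2
  have hZ0 : Z ≠ 0 := by
    intro h
    rw [h] at hZ1
    exact absurd hZ1 (by simp)
  set ν : Measure V := (2⁻¹ : ℝ≥0∞) • μ + ((2 * Z)⁻¹) • ρ with hν
  have hνapp : ∀ B : Set V, ν B = 2⁻¹ * μ B + (2 * Z)⁻¹ * ρ B := by
    intro B
    rw [hν]
    simp [Measure.add_apply, Measure.smul_apply, smul_eq_mul]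
  have hνuniv : ν Set.univ = 1 := by
    rw [hνapp, measure_univ, mul_one, ← hZ, hinvmul Z hZ0 hZnt]
    exact ENNReal.inv_two_add_inv_two
  have hmaj : ∀ A : Set V, μ A ≤ 2 * ν A := by
    intro A
    rw [hνapp, mul_add, ← mul_assoc, ENNReal.mul_inv_cancel h2ne h2nt, one_mul]
    exact le_self_add
  have hνnull : ∀ B : Set V, MeasurableSet B → (ν B = 0 ↔ ∀ n, μseq n B = 0) := by
    intro B hB
    rw [hνapp, add_eq_zero]
    constructor
    · rintro ⟨h1, h2⟩ n
      have hρ0 : ρ B = 0 := by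
        rcases mul_eq_zero.mp h2 with h | h
        · exact absurd h (ENNReal.inv_ne_zero.mpr (ENNReal.mul_ne_top h2nt hZnt))
        · exact h
      rw [hρapp B hB] at hρ0
      have hterm := ENNReal.tsum_eq_zero.mp hρ0 n
      rcases mul_eq_zero.mp hterm with h | h
      · exact absurd h (pow_ne_zero n hc0)
      · exact h
    · intro h
      constructor
      · rw [show μ B = μseq 0 B from rfl, h 0, mul_zero]
      · rw [hρapp B hB]
        have : ∀ n : ℕ, c ^ n * μseq n B = 0 := fun n => by rw [h n, mul_zero]
        rw [tsum_congr this, tsum_zero, mul_zero]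
  refine ⟨ν, ⟨hνuniv⟩, ?_, fun A _ => hmaj A⟩
  intro A hA
  constructor
  · intro hν0
    set Sk : ℕ → Set V := fun k => (fun S => S ∪ eS S)^[k] A with hSk
    have hSksucc : ∀ k, Sk (k + 1) = Sk k ∪ eS (Sk k) := by
      intro k
      rw [hSk]
      simp only
      rw [Function.iterate_succ_apply']
    have hSkmeas : ∀ k, MeasurableSet (Sk k) := by
      intro k
      induction k with
      | zero => exact hA
      | succ k ih =>
        rw [hSksucc]
        exact ih.union (heSmeas _ ih)
    have hSknull : ∀ k n, μseq n (Sk k) = 0 := by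
      intro k
      induction k with
      | zero => exact (hνnull A hA).mp hν0
      | succ k ih =>
        intro n
        rw [hSksucc]
        refine le_antisymm ?_ zero_le
        refine le_trans (measure_union_le _ _) ?_
        rw [ih n, (hTnull n (Sk k) (hSkmeas k)).mp (ih (n + 1)), add_zero]
    have hSat : Saturation E A ⊆ ⋃ k, Sk k := by
      rintro w ⟨a, haA, hreach⟩
      suffices h : ∃ k, w ∈ Sk k by
        obtain ⟨k, hk⟩ := h
        exact Set.mem_iUnion.mpr ⟨k, hk⟩
      induction hreach with
      | refl => exact ⟨0, haA⟩
      | tail hxy hE' ih' =>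
        obtain ⟨k, hk⟩ := ih'
        refine ⟨k + 1, ?_⟩
        rw [hSksucc]
        exact Or.inr ((heSmem _ _).mpr ⟨_, hk, hE'⟩)
    have hterm : ∀ k, ν (Sk k) = 0 :=
      fun k => (hνnull _ (hSkmeas k)).mpr (fun n => hSknull k n)
    refine le_antisymm ?_ zero_le
    refine le_trans (measure_mono hSat) ?_
    refine le_trans (measure_iUnion_le _) ?_
    rw [tsum_congr hterm, tsum_zero]
  · intro hsat
    refine le_antisymm (le_trans (measure_mono ?_) (le_of_eq hsat)) zero_le
    intro a haA
    exact ⟨a, haA, Relation.ReflTransGen.refl⟩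
end

section
/- Let G = (V, E) be a graph of bounded maximum degree Δ(G), fix a distinguished color a ∈ Δ(G)+1, and let d : E ⇀ Δ(G)+1 be a proper partial edge coloring. Then for every edge f ∈ E there are at most 2Δ(G) edges e ∈ E with d(e) = a such that f belongs to the alternating path P^d(e). -/
/-- The edge set of the graph, as unordered pairs. -/
def EdgeSet {V : Type*} (E : Set (V × V)) : Set (Sym2 V) :=
  {e : Sym2 V | ∃ x y : V, (x, y) ∈ E ∧ e = s(x, y)}

/-- `c` (with domain `dom`) is a proper partial edge coloring with `k` colors:
the domain consists of edges, colors are `< k`, and distinct edges of the domain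
sharing a vertex get distinct colors. -/
def IsProperPartialColoring {V : Type*} (E : Set (V × V)) (k : ℕ)
    (dom : Set (Sym2 V)) (c : Sym2 V → ℕ) : Prop :=
  dom ⊆ EdgeSet E ∧ (∀ e ∈ dom, c e < k) ∧
    ∀ e ∈ dom, ∀ f ∈ dom, e ≠ f → (∃ u : V, u ∈ e ∧ u ∈ f) → c e ≠ c f

/-- The color `γ` is missing at the vertex `v` for the partial coloring `c` on `dom`. -/
def MissingAt {V : Type*} (dom : Set (Sym2 V)) (c : Sym2 V → ℕ) (γ : ℕ) (v : V) : Prop :=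
  ∀ e ∈ dom, v ∈ e → c e ≠ γ

/-- The set of edges of the maximal alternating `β/γ` path of `c` starting at `v`
(the union of all finite alternating walks starting at `v` with first color `β`). -/
def AltPathEdges {V : Type*} (dom : Set (Sym2 V)) (c : Sym2 V → ℕ) (β γ : ℕ) (v : V) :
    Set (Sym2 V) :=
  {f : Sym2 V | ∃ (n : ℕ) (x : ℕ → V), x 0 = v ∧
    (∀ i ≤ n, s(x i, x (i + 1)) ∈ dom ∧
      c s(x i, x (i + 1)) = (if Even i then β else γ)) ∧
    f = s(x n, x (n + 1))}

/-- The path `P^c(e)`: the edge `e` followed by the maximal alternating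
`βe e / γe e` path starting at the chosen endpoint `ve e`. -/
def PPath {V : Type*} (dom : Set (Sym2 V)) (c : Sym2 V → ℕ)
    (ve : Sym2 V → V) (βe γe : Sym2 V → ℕ) (e : Sym2 V) : Set (Sym2 V) :=
  insert e (AltPathEdges dom c (βe e) (γe e) (ve e))

/-- Validity of the choice data defining `P^c(e)` at an edge `e` of color `a`:
`ve e` is an endpoint of `e`, the colors `βe e`, `γe e` are in `k` and differ from `a`,
`γe e` is missing at `ve e` and `βe e` is missing at the other endpoint of `e`. -/
def ValidChoice {V : Type*} (k : ℕ) (dom : Set (Sym2 V)) (c : Sym2 V → ℕ) (a : ℕ)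
    (ve : Sym2 V → V) (βe γe : Sym2 V → ℕ) (e : Sym2 V) : Prop :=
  ve e ∈ e ∧ βe e < k ∧ γe e < k ∧ βe e ≠ a ∧ γe e ≠ a ∧
    MissingAt dom c (γe e) (ve e) ∧
    ∃ w : V, e = s(ve e, w) ∧ MissingAt dom c (βe e) w

/-!
Walk the alternating path `P^d(e)` up to `f` and record the endpoint `u` of `f` through which
it is entered together with the colour `b` of the pair `{β(e), γ(e)}` other than `d(f)`; there
are at most `2Δ` such pairs `(u, b)`. Conversely `(u, b)` determines `e`: starting at `u` with
the edge of colour `b`, properness makes the alternating walk backwards unique, and it has to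
stop exactly at `v(e)`, the first vertex where the colour `γ(e)` is missing. Two distinct edges
of colour `a` cannot share the vertex `v(e)`.
-/

open Finset

section AlternatingWalks

variable {V : Type*} {dom : Set (Sym2 V)} {c : Sym2 V → ℕ}

def IsProperOn (dom : Set (Sym2 V)) (c : Sym2 V → ℕ) : Prop :=
  ∀ e ∈ dom, ∀ f ∈ dom, e ≠ f → (∃ u : V, u ∈ e ∧ u ∈ f) → c e ≠ c f

lemma IsProperOn.eq_of_mem (h : IsProperOn dom c) {e f : Sym2 V} (he : e ∈ dom) (hf : f ∈ dom)
    {u : V} (hue : u ∈ e) (huf : u ∈ f) (hc : c e = c f) : e = f :=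
  by_contra fun hne => h e he f hf hne ⟨u, hue, huf⟩ hc

lemma IsProperOn.walk_eq_of_colors_eq (h : IsProperOn dom c) {y y' : ℕ → V} {m : ℕ}
    (h0 : y 0 = y' 0)
    (hy : ∀ j < m, s(y j, y (j + 1)) ∈ dom) (hy' : ∀ j < m, s(y' j, y' (j + 1)) ∈ dom)
    (hc : ∀ j < m, c s(y j, y (j + 1)) = c s(y' j, y' (j + 1))) : ∀ j ≤ m, y j = y' j := by
  intro j hj
  induction j with
  | zero => exact h0
  | succ j ih =>
    have hjm : j < m := hj
    have hedge := h.eq_of_mem (hy j hjm) (hy' j hjm) (u := y j) (Sym2.mem_mk_left _ _)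
      (by rw [ih hjm.le]; exact Sym2.mem_mk_left _ _) (hc j hjm)
    rwa [ih hjm.le, Sym2.congr_right] at hedge

def IsAltWalk (dom : Set (Sym2 V)) (c : Sym2 V → ℕ) (β γ : ℕ) (x : ℕ → V) (n : ℕ) : Prop :=
  ∀ i ≤ n, s(x i, x (i + 1)) ∈ dom ∧ c s(x i, x (i + 1)) = if Even i then β else γ

lemma mem_dom_and_color_of_mem_altPathEdges {β γ : ℕ} {v : V} {f : Sym2 V}
    (hf : f ∈ AltPathEdges dom c β γ v) : f ∈ dom ∧ (c f = β ∨ c f = γ) := by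
  obtain ⟨n, x, -, hx, rfl⟩ := hf
  refine ⟨(hx n le_rfl).1, ?_⟩
  rw [(hx n le_rfl).2]
  split_ifs <;> simp

lemma ite_even_sub (β γ : ℕ) {n j : ℕ} (hj : j ≤ n) :
    (if Even (n - j) then β else γ) =
      if Even j then (if Even n then β else γ) else (if Even n then γ else β) := by
  simp only [Nat.even_sub hj]
  by_cases hn : Even n <;> by_cases hj : Even j <;> simp [hn, hj]

variable {β γ β' γ' n n' : ℕ} {x x' : ℕ → V}

lemma IsAltWalk.rev (hx : IsAltWalk dom c β γ x n) {j : ℕ} (hj : j < n) :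
    s(x (n - j), x (n - (j + 1))) ∈ dom ∧ c s(x (n - j), x (n - (j + 1))) =
      if Even j then (if Even n then γ else β) else (if Even n then β else γ) := by
  have hedge := hx (n - (j + 1)) (by omega)
  rw [show n - (j + 1) + 1 = n - j by omega, Sym2.eq_swap,
    ite_even_sub β γ (show j + 1 ≤ n by omega)] at hedge
  refine ⟨hedge.1, hedge.2.trans ?_⟩
  by_cases hj : Even j <;> simp [hj, Nat.even_add_one]

lemma IsAltWalk.rev_eq_of_end_eq (h : IsProperOn dom c) (hx : IsAltWalk dom c β γ x n)
    (hx' : IsAltWalk dom c β' γ' x' n') (hend : x n = x' n')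
    (hA : (if Even n then β else γ) = if Even n' then β' else γ')
    (hB : (if Even n then γ else β) = if Even n' then γ' else β') :
    ∀ j ≤ min n n', x (n - j) = x' (n' - j) :=
  h.walk_eq_of_colors_eq (y := fun j => x (n - j)) (y' := fun j => x' (n' - j))
    (by simpa using hend)
    (fun _ hj => (hx.rev (by omega)).1) (fun _ hj => (hx'.rev (by omega)).1)
    (fun _ hj => by rw [(hx.rev (by omega)).2, (hx'.rev (by omega)).2, hA, hB])

/-- The backward walk from `x n` would continue past `x 0` with an edge of colour `γ`. -/
lemma IsAltWalk.le_of_end_eq (h : IsProperOn dom c) (hx : IsAltWalk dom c β γ x n)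
    (hx' : IsAltWalk dom c β' γ' x' n') (hend : x n = x' n')
    (hA : (if Even n then β else γ) = if Even n' then β' else γ')
    (hB : (if Even n then γ else β) = if Even n' then γ' else β')
    (hm : MissingAt dom c γ (x 0)) : n' ≤ n := by
  by_contra! hlt
  have hv : x 0 = x' (n' - n) := by
    simpa using hx.rev_eq_of_end_eq h hx' hend hA hB n (by omega)
  obtain ⟨hmem, hcol⟩ := hx'.rev (j := n) hlt
  refine hm _ hmem (by rw [hv]; exact Sym2.mem_mk_left _ _) ?_
  rw [hcol, ← hA, ← hB]
  by_cases hn : Even n <;> simp [hn]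

lemma IsAltWalk.start_eq_of_end_eq (h : IsProperOn dom c) (hx : IsAltWalk dom c β γ x n)
    (hx' : IsAltWalk dom c β' γ' x' n') (hend : x n = x' n')
    (hA : (if Even n then β else γ) = if Even n' then β' else γ')
    (hB : (if Even n then γ else β) = if Even n' then γ' else β')
    (hm : MissingAt dom c γ (x 0)) (hm' : MissingAt dom c γ' (x' 0)) : x 0 = x' 0 := by
  obtain rfl : n = n' := le_antisymm (hx'.le_of_end_eq h hx hend.symm hA.symm hB.symm hm')
    (hx.le_of_end_eq h hx' hend hA hB hm)
  simpa using hx.rev_eq_of_end_eq h hx' hend hA hB n (by simp)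

/-- The alternating `β/γ` walk from `v` reaches `f` through the endpoint `p.1`, and `p.2` is the
colour of `{β, γ}` not carried by `f`. -/
def ReachesVia (dom : Set (Sym2 V)) (c : Sym2 V → ℕ) (β γ : ℕ) (v : V) (f : Sym2 V)
    (p : V × ℕ) : Prop :=
  ∃ n x, x 0 = v ∧ IsAltWalk dom c β γ x n ∧ f = s(x n, x (n + 1)) ∧
    p = (x n, if Even n then γ else β)

lemma exists_reachesVia {v : V} {f : Sym2 V} (hm : MissingAt dom c γ v)
    (hf : f ∈ AltPathEdges dom c β γ v) :
    ∃ p, ReachesVia dom c β γ v f p ∧ p.1 ∈ f ∧ p.2 ≠ c f ∧ (p.2 = β ∨ p.2 = γ) := by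
  obtain ⟨n, x, rfl, hx, rfl⟩ := hf
  have hβγ : β ≠ γ := fun hβγ =>
    hm _ (hx 0 n.zero_le).1 (Sym2.mem_mk_left _ _) (by simpa [hβγ] using (hx 0 n.zero_le).2)
  refine ⟨_, ⟨n, x, rfl, hx, rfl, rfl⟩, Sym2.mem_mk_left _ _, ?_, ?_⟩ <;>
    by_cases hn : Even n <;> simp [hn, (hx n le_rfl).2, hβγ, hβγ.symm]

lemma ReachesVia.start_eq (h : IsProperOn dom c) {v v' : V} {f : Sym2 V} {p : V × ℕ}
    (hr : ReachesVia dom c β γ v f p) (hr' : ReachesVia dom c β' γ' v' f p)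
    (hm : MissingAt dom c γ v) (hm' : MissingAt dom c γ' v') : v = v' := by
  obtain ⟨n, x, rfl, hx, hf, rfl⟩ := hr
  obtain ⟨n', x', rfl, hx', hf', hp⟩ := hr'
  obtain ⟨hend, hB⟩ := Prod.ext_iff.mp hp
  have hA : (if Even n then β else γ) = if Even n' then β' else γ' := by
    rw [← (hx n le_rfl).2, ← (hx' n' le_rfl).2, ← hf, ← hf']
  exact hx.start_eq_of_end_eq h hx' hend hA hB hm hm'

end AlternatingWalks

lemma Set.finite_and_ncard_le_of_labelling {α β : Type*} {S : Set α} (T : Finset β)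
    (R : α → β → Prop) (hex : ∀ a ∈ S, ∃ b ∈ T, R a b)
    (huniq : ∀ a ∈ S, ∀ a' ∈ S, ∀ b, R a b → R a' b → a = a') :
    S.Finite ∧ S.ncard ≤ T.card := by
  rcases S.eq_empty_or_nonempty with rfl | ⟨a₀, ha₀⟩
  · simp
  have : Nonempty β := ⟨(hex a₀ ha₀).choose⟩
  choose! g hgT hgR using hex
  have hinj : Set.InjOn g S := fun a ha a' ha' hg =>
    huniq a ha a' ha' _ (hgR a ha) (hg ▸ hgR a' ha')
  have hmaps : Set.MapsTo g S T := hgT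
  exact ⟨Set.Finite.of_finite_image (T.finite_toSet.subset hmaps.image_subset) hinj,
    (Set.ncard_le_ncard_of_injOn g hmaps hinj T.finite_toSet).trans (Set.ncard_coe_finset T).le⟩

section Counting

variable {V : Type*} {dom : Set (Sym2 V)} {c : Sym2 V → ℕ} {ve : Sym2 V → V}
  {βe γe : Sym2 V → ℕ} {a : ℕ}

lemma subset_singleton_of_color_eq {f : Sym2 V} (hfa : c f = a)
    (hchoice : ∀ e ∈ dom, c e = a → βe e ≠ a ∧ γe e ≠ a) :
    {e ∈ dom | c e = a ∧ f ∈ PPath dom c ve βe γe e} ⊆ {f} := by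
  rintro e ⟨he, hea, rfl | hfP⟩
  · rfl
  · obtain ⟨hβ, hγ⟩ := hchoice e he hea
    rcases (mem_dom_and_color_of_mem_altPathEdges hfP).2 with hc | hc
    exacts [(hβ (hc.symm.trans hfa)).elim, (hγ (hc.symm.trans hfa)).elim]

lemma finite_and_ncard_le_of_color_ne {k : ℕ} {u w : V} (hpr : IsProperOn dom c)
    (hlt : ∀ e ∈ dom, c e < k)
    (hchoice : ∀ e ∈ dom, c e = a → ValidChoice k dom c a ve βe γe e) (hfa : c s(u, w) ≠ a) :
    {e ∈ dom | c e = a ∧ s(u, w) ∈ PPath dom c ve βe γe e}.Finite ∧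
      {e ∈ dom | c e = a ∧ s(u, w) ∈ PPath dom c ve βe γe e}.ncard ≤ 2 * (k - 1) := by
  classical
  set S := {e ∈ dom | c e = a ∧ s(u, w) ∈ PPath dom c ve βe γe e}
  have hAlt : ∀ e ∈ S, s(u, w) ∈ AltPathEdges dom c (βe e) (γe e) (ve e) := by
    rintro e ⟨-, hea, hfe | hfP⟩
    exacts [absurd (hfe ▸ hea) hfa, hfP]
  obtain hS | ⟨e₀, he₀⟩ := S.eq_empty_or_nonempty
  · simp [hS]
  have hfd := (mem_dom_and_color_of_mem_altPathEdges (hAlt e₀ he₀)).1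
  refine (Set.finite_and_ncard_le_of_labelling
    (({u, w} : Finset V) ×ˢ ((range k).erase (c s(u, w))))
    (fun e => ReachesVia dom c (βe e) (γe e) (ve e) s(u, w)) ?_ ?_).imp_right
    fun hle => hle.trans ?_
  · intro e he
    obtain ⟨-, hβ, hγ, -, -, hm, -⟩ := hchoice e he.1 he.2.1
    obtain ⟨p, hp, hp₁, hp₂, hp₃⟩ := exists_reachesVia hm (hAlt e he)
    refine ⟨p, ?_, hp⟩
    simp only [mem_product, mem_insert, mem_singleton, mem_erase, mem_range]
    exact ⟨Sym2.mem_iff.mp hp₁, hp₂, by rcases hp₃ with h | h <;> rw [h] <;> assumption⟩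
  · rintro e ⟨he, hea, -⟩ e' ⟨he', hea', -⟩ p hp hp'
    obtain ⟨hv, -, -, -, -, hm, -⟩ := hchoice e he hea
    obtain ⟨hv', -, -, -, -, hm', -⟩ := hchoice e' he' hea'
    exact hpr.eq_of_mem he he' hv (hp.start_eq hpr hp' hm hm' ▸ hv') (hea.trans hea'.symm)
  · rw [card_product, card_erase_of_mem (mem_range.mpr (hlt _ hfd)), card_range]
    exact Nat.mul_le_mul_right _ card_le_two

end Counting

theorem card_edges_with_f_in_alternating_path_le_general
    {V : Type*}
    (E : Set (V × V))
    (D : ℕ)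
    (hdeg : ∀ v : V, {w | (v, w) ∈ E}.Finite ∧ {w | (v, w) ∈ E}.ncard ≤ D)
    (a : ℕ)
    (dom : Set (Sym2 V)) (d : Sym2 V → ℕ)
    (hproper : IsProperPartialColoring E (D + 1) dom d)
    (ve : Sym2 V → V) (βe γe : Sym2 V → ℕ)
    (hchoice : ∀ e ∈ dom, d e = a → ValidChoice (D + 1) dom d a ve βe γe e)
    (f : Sym2 V) (hf : f ∈ EdgeSet E) :
    {e ∈ dom | d e = a ∧ f ∈ PPath dom d ve βe γe e}.Finite ∧
      {e ∈ dom | d e = a ∧ f ∈ PPath dom d ve βe γe e}.ncard ≤ 2 * D := by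
  obtain ⟨x₀, y₀, hxy, rfl⟩ := hf
  obtain ⟨-, hlt, hpr : IsProperOn dom d⟩ := hproper
  by_cases hfa : d s(x₀, y₀) = a
  · have hS := subset_singleton_of_color_eq (ve := ve) hfa fun e he hea =>
      ⟨(hchoice e he hea).2.2.2.1, (hchoice e he hea).2.2.2.2.1⟩
    have hD : 1 ≤ D := ((Set.ncard_pos (hdeg x₀).1).mpr ⟨y₀, hxy⟩).trans_le (hdeg x₀).2
    exact ⟨(Set.finite_singleton _).subset hS,
      (Set.ncard_le_ncard hS).trans (by rw [Set.ncard_singleton]; omega)⟩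
  · simpa using finite_and_ncard_le_of_color_ne hpr hlt hchoice hfa

/-- For a graph of maximum degree at most `D`, a proper partial edge coloring `d` with
`D+1` colors and a distinguished color `a`, every edge `f` belongs to the alternating
path `P^d(e)` of at most `2D` edges `e` of color `a`. -/
theorem card_edges_with_f_in_alternating_path_le
    {V : Type*}
    (E : Set (V × V))
    (hsym : ∀ x y : V, (x, y) ∈ E → (y, x) ∈ E)
    (hirr : ∀ x : V, (x, x) ∉ E)
    (D : ℕ)
    (hdeg : ∀ v : V, {w | (v, w) ∈ E}.Finite ∧ {w | (v, w) ∈ E}.ncard ≤ D)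
    (a : ℕ) (ha : a < D + 1)
    (dom : Set (Sym2 V)) (d : Sym2 V → ℕ)
    (hproper : IsProperPartialColoring E (D + 1) dom d)
    (ve : Sym2 V → V) (βe γe : Sym2 V → ℕ)
    (hchoice : ∀ e ∈ dom, d e = a → ValidChoice (D + 1) dom d a ve βe γe e)
    (f : Sym2 V) (hf : f ∈ EdgeSet E) :
    {e ∈ dom | d e = a ∧ f ∈ PPath dom d ve βe γe e}.Finite ∧
      {e ∈ dom | d e = a ∧ f ∈ PPath dom d ve βe γe e}.ncard ≤ 2 * D :=
  card_edges_with_f_in_alternating_path_le_general E D hdeg a dom d hproper ve βe γe hchoice f hf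
end

section
/- Every finite 2Δ-regular graph G = (V, E) admits a Schreier decoration: there exist an orientation S of E and an edge coloring c : E → Δ such that every vertex v satisfies |in_S(v)| = |out_S(v)| = Δ and c is injective on in_S(v) and injective on out_S(v); equivalently, for every color α ∈ Δ and every vertex v there is exactly one out-edge of v with label α and exactly one in-edge of v with label α. -/
open Finset

lemma schreier_color_lemma {V : Type*} [Fintype V] [DecidableEq V] :
    ∀ (k : ℕ) (S : Finset (V × V)),
    (∀ v : V, (S.filter (fun p => p.1 = v)).card = k) →
    (∀ v : V, (S.filter (fun p => p.2 = v)).card = k) →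
    ∃ c : V × V → ℕ, (∀ p ∈ S, c p < k) ∧
      ∀ (v : V) (α : ℕ), α < k →
        (∃! w : V, (v, w) ∈ S ∧ c (v, w) = α) ∧
        (∃! w : V, (w, v) ∈ S ∧ c (w, v) = α) := by
  intro k
  induction k with
  | zero =>
    intro S hout _
    refine ⟨fun _ => 0, fun p hp => ?_, fun v α hα => by omega⟩
    have h1 : p ∈ S.filter (fun q => q.1 = p.1) := by simp [hp]
    have := Finset.card_pos.mpr ⟨p, h1⟩
    rw [hout p.1] at this
    omega
  | succ k ih =>
    intro S hout hin
    -- Hall's theorem to extract a perfect matching (a permutation f with (v, f v) ∈ S)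
    set r : V → Finset V := fun v => (S.filter (fun p => p.1 = v)).image Prod.snd with hr
    have hrcard : ∀ v, (r v).card = k + 1 := by
      intro v
      rw [hr]
      rw [Finset.card_image_of_injOn]
      · exact hout v
      · intro p hp q hq hpq
        simp only [mem_coe, mem_filter] at hp hq
        exact Prod.ext (hp.2.trans hq.2.symm) hpq
    have hmem : ∀ v w, w ∈ r v ↔ (v, w) ∈ S := by
      intro v w
      simp only [hr, mem_image, mem_filter]
      constructor
      · rintro ⟨p, ⟨hp, h1⟩, h2⟩
        rwa [← h1, ← h2]
      · intro h; exact ⟨(v, w), ⟨h, rfl⟩, rfl⟩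
    have hall : ∀ A : Finset V, A.card ≤ (A.biUnion r).card := by
      intro A
      -- double counting
      have h1 : (S.filter (fun p => p.1 ∈ A)).card = ∑ v ∈ A, (S.filter (fun p => p.1 = v)).card := by
        rw [Finset.card_eq_sum_card_fiberwise (f := Prod.fst) (s := S.filter (fun p => p.1 ∈ A)) (t := A)
          (fun p hp => (mem_filter.mp hp).2)]
        refine Finset.sum_congr rfl fun v hv => ?_
        congr 1
        ext p
        simp only [mem_filter, filter_filter]
        aesop
      have h2 : (S.filter (fun p => p.2 ∈ A.biUnion r)).card
          = ∑ w ∈ A.biUnion r, (S.filter (fun p => p.2 = w)).card := by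
        rw [Finset.card_eq_sum_card_fiberwise (f := Prod.snd) (s := S.filter (fun p => p.2 ∈ A.biUnion r)) (t := A.biUnion r)
          (fun p hp => (mem_filter.mp hp).2)]
        refine Finset.sum_congr rfl fun w hw => ?_
        congr 1
        ext p
        simp only [mem_filter, filter_filter]
        aesop
      have hsub : S.filter (fun p => p.1 ∈ A) ⊆ S.filter (fun p => p.2 ∈ A.biUnion r) := by
        intro p hp
        rw [mem_filter] at hp ⊢
        refine ⟨hp.1, Finset.mem_biUnion.mpr ⟨p.1, hp.2, ?_⟩⟩
        rw [hmem]
        exact hp.1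
      have hle := Finset.card_le_card hsub
      rw [h1, h2] at hle
      simp only [hout, hin, Finset.sum_const, smul_eq_mul] at hle
      exact Nat.le_of_mul_le_mul_right hle (Nat.succ_pos k)
    obtain ⟨f, hfinj, hf⟩ := (Finset.all_card_le_biUnion_card_iff_exists_injective r).mp hall
    have hfS : ∀ v, (v, f v) ∈ S := fun v => (hmem v (f v)).mp (hf v)
    have hfsurj : Function.Surjective f := Finite.surjective_of_injective hfinj
    -- remove the matching
    set S' : Finset (V × V) := S.filter (fun p => p.2 ≠ f p.1) with hS'
    have hout' : ∀ v, (S'.filter (fun p => p.1 = v)).card = k := by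
      intro v
      have : S'.filter (fun p => p.1 = v) = (S.filter (fun p => p.1 = v)).erase (v, f v) := by
        ext ⟨a, b⟩
        simp only [hS', mem_erase, mem_filter, filter_filter, ne_eq, Prod.mk.injEq]
        constructor
        · rintro ⟨hp, hne, rfl⟩
          exact ⟨fun h => hne h.2, hp, rfl⟩
        · rintro ⟨hne, hp, rfl⟩
          exact ⟨hp, fun h => hne ⟨rfl, h⟩, rfl⟩
      rw [this, Finset.card_erase_of_mem (by simp [hfS v]), hout v]
      omega
    have hin' : ∀ w, (S'.filter (fun p => p.2 = w)).card = k := by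
      intro w
      obtain ⟨u, hu⟩ := hfsurj w
      have huS : (u, w) ∈ S := by rw [← hu]; exact hfS u
      have : S'.filter (fun p => p.2 = w) = (S.filter (fun p => p.2 = w)).erase (u, w) := by
        ext ⟨a, b⟩
        simp only [hS', mem_erase, mem_filter, filter_filter, ne_eq, Prod.mk.injEq]
        constructor
        · rintro ⟨hp, hne, rfl⟩
          refine ⟨fun h => hne ?_, hp, rfl⟩
          rw [h.1, hu]
        · rintro ⟨hne, hp, rfl⟩
          refine ⟨hp, fun h => hne ⟨hfinj (by rw [← h, hu]), rfl⟩, rfl⟩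
      rw [this, Finset.card_erase_of_mem (by simp [huS]), hin w]
      omega
    obtain ⟨c', hc'lt, hc'⟩ := ih S' hout' hin'
    refine ⟨fun p => if p.2 = f p.1 then k else c' p, ?_, ?_⟩
    · intro p hp
      by_cases h : p.2 = f p.1
      · simp [h]
      · simp only [h, if_neg, if_false]
        have : p ∈ S' := by simp [hS', hp, h]
        exact Nat.lt_succ_of_lt (hc'lt p this)
    · intro v α hα
      rcases Nat.lt_succ_iff_lt_or_eq.mp hα with hlt | rfl
      · obtain ⟨⟨w0, ⟨hw0S, hw0c⟩, hw0u⟩, ⟨u0, ⟨hu0S, hu0c⟩, hu0u⟩⟩ := hc' v α hlt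
        constructor
        · refine ⟨w0, ⟨?_, ?_⟩, ?_⟩
          · exact (mem_filter.mp hw0S).1
          · have hne : w0 ≠ f v := by
              have := (mem_filter.mp hw0S).2; simpa using this
            simp [hne, hw0c]
          · rintro w ⟨hwS, hwc⟩
            by_cases h : w = f v
            · simp [h] at hwc; omega
            · apply hw0u
              refine ⟨by simp [hS', hwS, h], ?_⟩
              simpa [h] using hwc
        · refine ⟨u0, ⟨?_, ?_⟩, ?_⟩
          · exact (mem_filter.mp hu0S).1
          · have hne : v ≠ f u0 := by
              have := (mem_filter.mp hu0S).2; simpa using this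
            simp [hne, hu0c]
          · rintro u ⟨huS, huc⟩
            by_cases h : v = f u
            · simp [h] at huc; omega
            · apply hu0u
              refine ⟨by simp [hS', huS, h], ?_⟩
              simpa [h] using huc
      · constructor
        · refine ⟨f v, ⟨hfS v, by simp⟩, ?_⟩
          rintro w ⟨hwS, hwc⟩
          by_cases h : w = f v
          · exact h
          · simp only [h, if_neg, if_false] at hwc
            have : (v, w) ∈ S' := by simp [hS', hwS, h]
            have := hc'lt _ this
            omega
        · obtain ⟨u, hu⟩ := hfsurj v
          refine ⟨u, ⟨hu ▸ hfS u, by simp [hu]⟩, ?_⟩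
          rintro w ⟨hwS, hwc⟩
          by_cases h : v = f w
          · exact hfinj (by rw [← h, hu])
          · simp only [h, if_neg, if_false] at hwc
            have : (w, v) ∈ S' := by simp [hS', hwS, h]
            have := hc'lt _ this
            omega

open Finset

lemma schreier_orient_lemma {V : Type*} [Fintype V] [DecidableEq V]
    (E : Finset (V × V))
    (hsym : ∀ x y : V, (x, y) ∈ E → (y, x) ∈ E)
    (hirr : ∀ x : V, (x, x) ∉ E)
    (Δ : ℕ)
    (hdeg : ∀ v : V, (E.filter (fun p => p.1 = v)).card = 2 * Δ) :
    ∃ S : Finset (V × V), S ⊆ E ∧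
      (∀ x y : V, (x, y) ∈ E → Xor' ((x, y) ∈ S) ((y, x) ∈ S)) ∧
      (∀ v : V, (S.filter (fun p => p.1 = v)).card = Δ ∧
        (S.filter (fun p => p.2 = v)).card = Δ) := by
  set ord : V → ℕ := fun v => ((Fintype.equivFin V) v : ℕ) with hord
  have hordinj : Function.Injective ord := fun a b h =>
    (Fintype.equivFin V).injective (Fin.ext h)
  have hne : ∀ p ∈ E, p.1 ≠ p.2 := by
    rintro ⟨x, y⟩ hp h
    dsimp at h
    subst h
    exact hirr x hp
  set Eo : Finset (V × V) := E.filter (fun p => ord p.1 < ord p.2) with hEo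
  have hfiber : ∀ (T : Finset (V × V)) (A : Finset V),
      (T.filter (fun p => p.1 ∈ A)).card = ∑ v ∈ A, (T.filter (fun p => p.1 = v)).card := by
    intro T A
    rw [Finset.card_eq_sum_card_fiberwise (f := Prod.fst) (s := T.filter (fun p => p.1 ∈ A)) (t := A)
      (fun p hp => (mem_filter.mp hp).2)]
    refine Finset.sum_congr rfl fun v hv => ?_
    congr 1
    ext p
    simp only [mem_filter, filter_filter]
    aesop
  have hswap_mem : ∀ p : V × V, p ∈ E → (ord p.2 < ord p.1) → p.swap ∈ Eo := by
    rintro ⟨x, y⟩ hp h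
    simp only [hEo, mem_filter, Prod.swap]
    exact ⟨hsym x y hp, h⟩
  have hEsplit : ∀ p : V × V, p ∈ E → (p ∈ Eo ∧ p.swap ∉ Eo) ∨ (p ∉ Eo ∧ p.swap ∈ Eo) := by
    rintro ⟨x, y⟩ hp
    rcases lt_trichotomy (ord x) (ord y) with h | h | h
    · left
      constructor
      · simp only [hEo, mem_filter]; exact ⟨hp, h⟩
      · simp only [hEo, mem_filter, Prod.swap]
        rintro ⟨-, h2⟩; omega
    · exact absurd (hordinj h) (hne _ hp)
    · right
      constructor
      · simp only [hEo, mem_filter]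
        rintro ⟨-, h2⟩; omega
      · exact hswap_mem _ hp h
  set t : {e // e ∈ Eo} → Finset (V × Fin Δ) :=
    fun e => ({e.1.1, e.1.2} : Finset V) ×ˢ univ with ht
  have hall : ∀ A : Finset {e // e ∈ Eo}, A.card ≤ (A.biUnion t).card := by
    intro A
    set VA : Finset V := A.biUnion (fun e => ({e.1.1, e.1.2} : Finset V)) with hVA
    have hbU : A.biUnion t = VA ×ˢ (univ : Finset (Fin Δ)) := by
      ext ⟨v, i⟩
      simp only [ht, hVA, mem_biUnion, mem_product, mem_univ, and_true]
    have hbUcard : (A.biUnion t).card = VA.card * Δ := by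
      rw [hbU, Finset.card_product, Finset.card_univ, Fintype.card_fin]
    set B : Finset (V × V) := A.image (fun e => e.1) with hB
    have hBcard : B.card = A.card := Finset.card_image_of_injective _ Subtype.val_injective
    have hBEo : B ⊆ Eo := by
      intro p hp
      obtain ⟨e, _, rfl⟩ := mem_image.mp hp
      exact e.2
    have hBsw : Disjoint B (B.image Prod.swap) := by
      rw [Finset.disjoint_left]
      intro p hp hq
      obtain ⟨q, hqB, rfl⟩ := mem_image.mp hq
      have h1 := (mem_filter.mp (hBEo hp)).2
      have h2 := (mem_filter.mp (hBEo hqB)).2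
      simp only [Prod.fst_swap, Prod.snd_swap] at h1
      omega
    have hC : B ∪ B.image Prod.swap ⊆ E.filter (fun p => p.1 ∈ VA) := by
      intro p hp
      rcases mem_union.mp hp with hp | hp
      · obtain ⟨e, he, rfl⟩ := mem_image.mp hp
        refine mem_filter.mpr ⟨(mem_filter.mp e.2).1, ?_⟩
        exact mem_biUnion.mpr ⟨e, he, by simp⟩
      · obtain ⟨q, hq, rfl⟩ := mem_image.mp hp
        obtain ⟨e, he, rfl⟩ := mem_image.mp hq
        refine mem_filter.mpr ⟨hsym _ _ (mem_filter.mp e.2).1, ?_⟩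
        exact mem_biUnion.mpr ⟨e, he, by simp⟩
    have hcount : 2 * A.card ≤ VA.card * (2 * Δ) := by
      have h1 : (B ∪ B.image Prod.swap).card = 2 * A.card := by
        rw [Finset.card_union_of_disjoint hBsw,
          Finset.card_image_of_injective _ Prod.swap_injective, hBcard]
        ring
      have h2 := Finset.card_le_card hC
      rw [h1, hfiber E VA] at h2
      simpa only [hdeg, Finset.sum_const, smul_eq_mul] using h2
    rw [hbUcard]
    have : 2 * A.card ≤ 2 * (VA.card * Δ) := by
      calc 2 * A.card ≤ VA.card * (2 * Δ) := hcount
        _ = 2 * (VA.card * Δ) := by ring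
    omega
  obtain ⟨f, hfinj, hf⟩ := (Finset.all_card_le_biUnion_card_iff_exists_injective t).mp hall
  have hfst : ∀ e : {e // e ∈ Eo}, (f e).1 = e.1.1 ∨ (f e).1 = e.1.2 := by
    intro e
    have := hf e
    simp only [ht, mem_product, mem_insert, mem_singleton] at this
    exact this.1
  set g : {e // e ∈ Eo} → V × V := fun e => if (f e).1 = e.1.1 then e.1 else e.1.swap with hg
  have hg_or : ∀ e, g e = e.1 ∨ g e = e.1.swap := by
    intro e
    by_cases h : (f e).1 = e.1.1 <;> simp [hg, h]
  have hgfst : ∀ e, (g e).1 = (f e).1 := by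
    intro e
    by_cases h : (f e).1 = e.1.1
    · simp [hg, h]
    · rcases hfst e with h' | h'
      · exact absurd h' h
      · rw [hg]
        simp only [if_neg h, Prod.fst_swap]
        exact h'.symm
  have hrec : ∀ e : {e // e ∈ Eo},
      e.1 = if ord (g e).1 < ord (g e).2 then g e else (g e).swap := by
    intro e
    have heo := (mem_filter.mp e.2).2
    rcases hg_or e with h | h
    · rw [h, if_pos heo]
    · rw [h]
      have : ¬ ord e.1.swap.1 < ord e.1.swap.2 := by
        simp only [Prod.fst_swap, Prod.snd_swap]; omega
      rw [if_neg this, Prod.swap_swap]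
  have hginj : Function.Injective g := by
    intro e1 e2 h
    apply Subtype.ext
    rw [hrec e1, hrec e2, h]
  set S : Finset (V × V) := Eo.attach.image g with hS
  have hSmem : ∀ p : V × V, p ∈ S ↔ ∃ e : {e // e ∈ Eo}, g e = p := by
    intro p
    simp only [hS, mem_image, mem_attach, true_and]
  have hSsub : S ⊆ E := by
    intro p hp
    obtain ⟨e, rfl⟩ := (hSmem p).mp hp
    rcases hg_or e with h | h <;> rw [h]
    · exact (mem_filter.mp e.2).1
    · have h1 : (e.1.1, e.1.2) ∈ E := (mem_filter.mp e.2).1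
      exact hsym _ _ h1
  have hxor : ∀ x y : V, (x, y) ∈ E → Xor' ((x, y) ∈ S) ((y, x) ∈ S) := by
    have key : ∀ x y : V, (x, y) ∈ Eo → Xor' ((x, y) ∈ S) ((y, x) ∈ S) := by
      intro x y hxy
      set e : {e // e ∈ Eo} := ⟨(x, y), hxy⟩ with he
      have hordxy : ord x < ord y := (mem_filter.mp hxy).2
      have hnexy : x ≠ y := hne _ (mem_filter.mp hxy).1
      have mem1 : (x, y) ∈ S ↔ g e = (x, y) := by
        rw [hSmem]
        constructor
        · rintro ⟨e', hge'⟩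
          have he' : e' = e := by
            apply Subtype.ext
            rw [hrec e', hge']
            simp only [he, if_pos hordxy]
          rw [← he', hge']
        · intro h; exact ⟨e, h⟩
      have mem2 : (y, x) ∈ S ↔ g e = (y, x) := by
        rw [hSmem]
        constructor
        · rintro ⟨e', hge'⟩
          have hneg : ¬ ord (y, x).1 < ord (y, x).2 := by dsimp; omega
          have he' : e' = e := by
            apply Subtype.ext
            rw [hrec e', hge', if_neg hneg]
            rfl
          rw [← he', hge']
        · intro h; exact ⟨e, h⟩
      rw [mem1, mem2]
      rcases hg_or e with h | h
      · left
        refine ⟨h, fun h2 => ?_⟩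
        rw [h] at h2
        exact hnexy (congrArg Prod.fst h2)
      · right
        refine ⟨h, fun h2 => ?_⟩
        rw [h] at h2
        exact hnexy (congrArg Prod.snd h2)
    intro x y hxy
    rcases hEsplit (x, y) hxy with ⟨h1, -⟩ | ⟨-, h2⟩
    · exact key x y h1
    · exact (_root_.xor_comm _ _).mp (key y x h2)
  have hEocard : 2 * Eo.card = 2 * Δ * Fintype.card V := by
    have hsplit : Eo ∪ Eo.image Prod.swap = E := by
      ext p
      simp only [mem_union, mem_image]
      constructor
      · rintro (hp | ⟨q, hq, rfl⟩)
        · exact (mem_filter.mp (hEo ▸ hp)).1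
        · have h1 : (q.1, q.2) ∈ E := (mem_filter.mp (hEo ▸ hq)).1
          exact hsym _ _ h1
      · intro hp
        rcases hEsplit p hp with ⟨h1, -⟩ | ⟨-, h2⟩
        · exact Or.inl h1
        · exact Or.inr ⟨p.swap, h2, Prod.swap_swap p⟩
    have hdisj : Disjoint Eo (Eo.image Prod.swap) := by
      rw [Finset.disjoint_left]
      intro p hp hq
      obtain ⟨q, hqB, rfl⟩ := mem_image.mp hq
      have h1 := (mem_filter.mp (hEo ▸ hp)).2
      have h2 := (mem_filter.mp (hEo ▸ hqB)).2
      simp only [Prod.fst_swap, Prod.snd_swap] at h1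
      omega
    have hEcard : E.card = ∑ v ∈ (univ : Finset V), (E.filter (fun p => p.1 = v)).card :=
      Finset.card_eq_sum_card_fiberwise (fun p _ => mem_univ _)
    have h2 : E.card = 2 * Eo.card := by
      rw [← hsplit, Finset.card_union_of_disjoint hdisj,
        Finset.card_image_of_injective _ Prod.swap_injective]
      ring
    rw [← h2, hEcard]
    simp only [hdeg, Finset.sum_const, smul_eq_mul, Finset.card_univ]
    ring
  -- out-degrees
  have hout : ∀ v : V, (S.filter (fun p => p.1 = v)).card = Δ := by
    have hfibre_eq : ∀ v : V, S.filter (fun p => p.1 = v)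
        = (Eo.attach.filter (fun e => (f e).1 = v)).image g := by
      intro v
      ext p
      simp only [hS, mem_filter, mem_image, mem_attach, true_and]
      constructor
      · rintro ⟨⟨e, rfl⟩, h⟩
        exact ⟨e, by rw [← hgfst e]; exact h, rfl⟩
      · rintro ⟨e, he, rfl⟩
        exact ⟨⟨e, rfl⟩, by rw [hgfst e]; exact he⟩
    have hbound : ∀ v : V, (Eo.attach.filter (fun e => (f e).1 = v)).card ≤ Δ := by
      intro v
      have hle : ((Eo.attach.filter (fun e => (f e).1 = v)).image f).card
          ≤ (({v} : Finset V) ×ˢ (univ : Finset (Fin Δ))).card := by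
        apply Finset.card_le_card
        intro q hq
        obtain ⟨e, he, rfl⟩ := mem_image.mp hq
        have h1 := (mem_filter.mp he).2
        simp only [mem_product, mem_singleton, mem_univ, and_true]
        exact h1
      rw [Finset.card_image_of_injective _ hfinj] at hle
      simpa [Finset.card_product] using hle
    have hsum : ∑ v ∈ (univ : Finset V), (Eo.attach.filter (fun e => (f e).1 = v)).card
        = Eo.attach.card :=
      (Finset.card_eq_sum_card_fiberwise (f := fun e => (f e).1) (t := univ)
        (fun e _ => mem_univ _)).symm
    have htot : Eo.attach.card = Δ * Fintype.card V := by
      rw [Finset.card_attach]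
      refine Nat.eq_of_mul_eq_mul_left (show 0 < 2 by norm_num) ?_
      rw [hEocard]; ring
    have heq : ∑ v ∈ (univ : Finset V), (Eo.attach.filter (fun e => (f e).1 = v)).card
        = ∑ _v ∈ (univ : Finset V), Δ := by
      rw [hsum, htot, Finset.sum_const, smul_eq_mul, Finset.card_univ, mul_comm]
    have hforce := (Finset.sum_eq_sum_iff_of_le (fun v _ => hbound v)).mp heq
    intro v
    rw [hfibre_eq v, Finset.card_image_of_injective _ hginj]
    exact hforce v (mem_univ v)
  -- in-degrees
  have hSun : S ∪ S.image Prod.swap = E := by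
    ext p
    simp only [mem_union, mem_image]
    constructor
    · rintro (hp | ⟨⟨a, b⟩, hq, rfl⟩)
      · exact hSsub hp
      · exact hsym a b (hSsub hq)
    · intro hp
      rcases hxor p.1 p.2 hp with ⟨h1, -⟩ | ⟨h1, -⟩
      · exact Or.inl h1
      · exact Or.inr ⟨(p.2, p.1), h1, rfl⟩
  have hSdisj : Disjoint S (S.image Prod.swap) := by
    rw [Finset.disjoint_left]
    intro p hp hq
    obtain ⟨⟨a, b⟩, hqS, rfl⟩ := mem_image.mp hq
    have hE1 : (a, b) ∈ E := hSsub hqS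
    rcases hxor a b hE1 with ⟨-, h2⟩ | ⟨-, h2⟩
    · exact h2 hp
    · exact h2 hqS
  have hin : ∀ v : V, (S.filter (fun p => p.2 = v)).card = Δ := by
    intro v
    have hsplitv : E.filter (fun p => p.1 = v)
        = S.filter (fun p => p.1 = v) ∪ (S.image Prod.swap).filter (fun p => p.1 = v) := by
      rw [← Finset.filter_union, hSun]
    have hdisjv : Disjoint (S.filter (fun p => p.1 = v))
        ((S.image Prod.swap).filter (fun p => p.1 = v)) :=
      hSdisj.mono (filter_subset _ _) (filter_subset _ _)
    have himg : (S.image Prod.swap).filter (fun p => p.1 = v)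
        = (S.filter (fun p => p.2 = v)).image Prod.swap := by
      ext p
      simp only [mem_filter, mem_image]
      constructor
      · rintro ⟨⟨q, hq, rfl⟩, h⟩
        simp only [Prod.fst_swap] at h
        exact ⟨q, ⟨hq, h⟩, rfl⟩
      · rintro ⟨q, ⟨hq, h⟩, rfl⟩
        exact ⟨⟨q, hq, rfl⟩, by simpa using h⟩
    have hdv := hdeg v
    rw [hsplitv, Finset.card_union_of_disjoint hdisjv, hout v, himg,
      Finset.card_image_of_injective _ Prod.swap_injective] at hdv
    omega
  exact ⟨S, hSsub, hxor, fun v => ⟨hout v, hin v⟩⟩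
open Finset

/-- Every finite `2Δ`-regular graph admits a Schreier decoration: an orientation `S` of the
edges together with an edge coloring with `Δ` colors such that at every vertex each color
appears exactly once on an out-edge and exactly once on an in-edge. -/
theorem finite_schreier_decoration
    {V : Type*} [Fintype V]
    (E : Set (V × V))
    (hsym : ∀ x y : V, (x, y) ∈ E → (y, x) ∈ E)
    (hirr : ∀ x : V, (x, x) ∉ E)
    (Δ : ℕ)
    (hreg : ∀ v : V, {w | (v, w) ∈ E}.ncard = 2 * Δ) :
    ∃ (S : Set (V × V)) (c : V × V → ℕ),
      S ⊆ E ∧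
      (∀ x y : V, (x, y) ∈ E → Xor' ((x, y) ∈ S) ((y, x) ∈ S)) ∧
      (∀ p ∈ E, c p < Δ) ∧
      (∀ x y : V, (x, y) ∈ E → c (x, y) = c (y, x)) ∧
      (∀ (v : V) (α : ℕ), α < Δ →
        (∃! w : V, (v, w) ∈ S ∧ c (v, w) = α) ∧
        (∃! w : V, (w, v) ∈ S ∧ c (w, v) = α)) := by
  classical
  set Ef : Finset (V × V) := E.toFinset with hEf
  have hmemEf : ∀ p : V × V, p ∈ Ef ↔ p ∈ E := fun p => Set.mem_toFinset
  have hsymf : ∀ x y : V, (x, y) ∈ Ef → (y, x) ∈ Ef := fun x y h =>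
    (hmemEf _).mpr (hsym x y ((hmemEf _).mp h))
  have hirrf : ∀ x : V, (x, x) ∉ Ef := fun x h => hirr x ((hmemEf _).mp h)
  have hdeg : ∀ v : V, (Ef.filter (fun p => p.1 = v)).card = 2 * Δ := by
    intro v
    rw [← hreg v]
    have h1 : (Ef.filter (fun p => p.1 = v)).card
        = ((Ef.filter (fun p => p.1 = v)).image Prod.snd).card :=
      (Finset.card_image_of_injOn (fun p hp q hq h =>
        Prod.ext ((mem_filter.mp hp).2.trans (mem_filter.mp hq).2.symm) h)).symm
    have h2 : (Ef.filter (fun p => p.1 = v)).image Prod.snd = {w | (v, w) ∈ E}.toFinset := by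
      ext w
      simp only [Finset.mem_image, Finset.mem_filter, Set.mem_toFinset, Set.mem_setOf_eq]
      constructor
      · rintro ⟨p, ⟨hp, hpv⟩, rfl⟩
        have hpE : p ∈ E := (hmemEf _).mp hp
        rw [← hpv]
        exact hpE
      · intro hw
        exact ⟨(v, w), ⟨(hmemEf _).mpr hw, rfl⟩, rfl⟩
    rw [h1, h2, ← Set.ncard_eq_toFinset_card']
  obtain ⟨S, hSsub, hxor, hdegS⟩ := schreier_orient_lemma Ef hsymf hirrf Δ hdeg
  obtain ⟨cS, hcSlt, hcS⟩ :=
    schreier_color_lemma Δ S (fun v => (hdegS v).1) (fun v => (hdegS v).2)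
  set c : V × V → ℕ := fun p => if p ∈ S then cS p else cS p.swap with hc
  refine ⟨(↑S : Set (V × V)), c, ?_, ?_, ?_, ?_, ?_⟩
  · intro p hp
    exact (hmemEf _).mp (hSsub hp)
  · intro x y hxy
    exact hxor x y ((hmemEf _).mpr hxy)
  · intro p hp
    by_cases hpS : p ∈ S
    · simpa [hc, hpS] using hcSlt p hpS
    · rcases hxor p.1 p.2 ((hmemEf _).mpr hp) with ⟨h1, -⟩ | ⟨h1, -⟩
      · exact absurd h1 hpS
      · have : c p = cS p.swap := by simp [hc, hpS]
        rw [this]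
        exact hcSlt _ h1
  · intro x y hxy
    rcases hxor x y ((hmemEf _).mpr hxy) with ⟨h1, h2⟩ | ⟨h1, h2⟩
    · simp [hc, h1, h2]
    · simp [hc, h1, h2]
  · intro v α hα
    obtain ⟨h1, h2⟩ := hcS v α hα
    constructor
    · obtain ⟨w, ⟨hwS, hwc⟩, huniq⟩ := h1
      refine ⟨w, ⟨hwS, by simp [hc, hwS, hwc]⟩, ?_⟩
      rintro w' ⟨hw'S, hw'c⟩
      have hw'S' : (v, w') ∈ S := hw'S
      apply huniq
      exact ⟨hw'S', by simpa [hc, hw'S'] using hw'c⟩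
    · obtain ⟨w, ⟨hwS, hwc⟩, huniq⟩ := h2
      refine ⟨w, ⟨hwS, by simp [hc, hwS, hwc]⟩, ?_⟩
      rintro w' ⟨hw'S, hw'c⟩
      have hw'S' : (w', v) ∈ S := hw'S
      apply huniq
      exact ⟨hw'S', by simpa [hc, hw'S'] using hw'c⟩
end
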